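/- arXiv:1106.2735 — 7 statements merged into one kernel-verified Lean document; each statement's English description precedes it below -/
import Mathlib

section
/- Let A be an n x n positive semidefinite symmetric matrix and let B be the 2n x 2n symmetric matrix with zero diagonal blocks and off-diagonal blocks A/2 (i.e., B = [[0, A/2],[A/2, 0]]). Then max_{Z in E_{2n}} <B, Z> = max_{X in E_n} <A, X>, and max_{z in {-1,1}^{2n}} z^T B z = max_{x in {-1,1}^n} x^T A x. -/
open Finset Real
open scoped Classical Pointwise

noncomputable section

variable {V : Type*} [Fintype V] [LinearOrder V]

/-- Sum over the edges of `G` (pairs `i < j` with `G.Adj i j`) of `w i j * x i j`. -/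
def edgeSum (G : SimpleGraph V) (w : V → V → ℝ) (x : V → V → ℝ) : ℝ :=
  ∑ i, ∑ j, if i < j ∧ G.Adj i j then w i j * x i j else 0

/-- `ip(G,w)`: maximum of `∑_{ij ∈ E} w_ij x_i x_j` over `x ∈ {±1}^V`. -/
def ipVal (G : SimpleGraph V) (w : V → V → ℝ) : ℝ :=
  sSup {t | ∃ x : V → ℝ, (∀ i, x i = 1 ∨ x i = -1) ∧
    t = edgeSum G w (fun i j => x i * x j)}

/-- `sdp(G,w)`: maximum of `∑_{ij ∈ E} w_ij ⟪u_i,u_j⟫` over unit vectors. -/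
def sdpVal (G : SimpleGraph V) (w : V → V → ℝ) : ℝ :=
  sSup {t | ∃ u : V → EuclideanSpace ℝ V, (∀ i, ‖u i‖ = 1) ∧
    t = edgeSum G w (fun i j => (inner ℝ (u i) (u j) : ℝ))}

/-- The Grothendieck constant `κ(G) = sup_w sdp(G,w)/ip(G,w)`. -/
def kappaVal (G : SimpleGraph V) : ℝ :=
  sSup {t | ∃ w : V → V → ℝ, t = sdpVal G w / ipVal G w}

/-- The elliptope: PSD matrices with unit diagonal. -/
def elliptope (V : Type*) [Fintype V] : Set (Matrix V V ℝ) :=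
  {X | X.PosSemidef ∧ ∀ i, X i i = 1}

/-- The cut polytope: convex hull of rank-one ±1 correlation matrices. -/
def cutPolytope (V : Type*) [Fintype V] : Set (Matrix V V ℝ) :=
  convexHull ℝ {X | ∃ x : V → ℝ, (∀ i, x i = 1 ∨ x i = -1) ∧
    X = Matrix.of fun i j => x i * x j}

/-- Projection of a matrix onto the edge set of `G`. -/
def projE (G : SimpleGraph V) (X : Matrix V V ℝ) : V → V → ℝ :=
  fun i j => if G.Adj i j then X i j else 0

/-- `𝓔(G)`: projection of the elliptope onto the edge set of `G`. -/
def ellG (G : SimpleGraph V) : Set (V → V → ℝ) := projE G '' elliptope V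

/-- `CUT(G)`: projection of the cut polytope onto the edge set of `G`. -/
def cutG (G : SimpleGraph V) : Set (V → V → ℝ) := projE G '' cutPolytope V

end

/-!
Both identities come from one inequality. If `Z ⪰ 0` on the doubled index set has diagonal
blocks `P, R` and off-diagonal blocks `Q, Q'`, then `⟨B, Z⟩ = ⟨A, Q + Q'⟩ / 2`, and
`P + R - Q - Q' = Kᵀ Z K ⪰ 0` for `K = [I; -I]`, so by the Schur product theorem
`⟨A, Q + Q'⟩ ≤ ⟨A, P⟩ + ⟨A, R⟩ ≤ 2 max (⟨A, P⟩, ⟨A, R⟩)`. For `Z ∈ 𝓔_{2n}` the blocks `P, R` lie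
in `𝓔_n`; for `Z = z zᵀ` they are `x xᵀ, y yᵀ` with `z = (x, y)`. Conversely `X ↦ [[X, X], [X, X]]`
and `x ↦ (x, x)` reproduce every value of the smaller problems, so the two value sets dominate
each other and have the same supremum.
-/

namespace Matrix

variable {m n p q : Type*}

theorem vecMulVec_sumElim_self (x : m → ℝ) (y : n → ℝ) :
    vecMulVec (Sum.elim x x) (Sum.elim y y) =
      fromBlocks (vecMulVec x y) (vecMulVec x y) (vecMulVec x y) (vecMulVec x y) := by
  ext (i | i) (j | j) <;> rfl

variable [Fintype m] [Fintype n] [Fintype p] [Fintype q]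

/-- The trace inner product `⟨A, X⟩` of the paper. -/
def frobeniusPairing (A X : Matrix m n ℝ) : ℝ := ∑ i, ∑ j, A i j * X i j

theorem frobeniusPairing_fromBlocks (A : Matrix m p ℝ) (B : Matrix m q ℝ) (C : Matrix n p ℝ)
    (D : Matrix n q ℝ) (Z : Matrix (m ⊕ n) (p ⊕ q) ℝ) :
    frobeniusPairing (fromBlocks A B C D) Z =
      frobeniusPairing A Z.toBlocks₁₁ + frobeniusPairing B Z.toBlocks₁₂ +
        frobeniusPairing C Z.toBlocks₂₁ + frobeniusPairing D Z.toBlocks₂₂ := by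
  simp only [frobeniusPairing, Fintype.sum_sum_type, fromBlocks_apply₁₁, fromBlocks_apply₁₂,
    fromBlocks_apply₂₁, fromBlocks_apply₂₂, toBlocks₁₁, toBlocks₁₂, toBlocks₂₁, toBlocks₂₂,
    of_apply, Finset.sum_add_distrib]
  ring

theorem frobeniusPairing_add_right (A X Y : Matrix m n ℝ) :
    frobeniusPairing A (X + Y) = frobeniusPairing A X + frobeniusPairing A Y := by
  simp only [frobeniusPairing, add_apply, mul_add, Finset.sum_add_distrib]

theorem frobeniusPairing_sub_right (A X Y : Matrix m n ℝ) :
    frobeniusPairing A (X - Y) = frobeniusPairing A X - frobeniusPairing A Y := by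
  simp only [frobeniusPairing, sub_apply, mul_sub, Finset.sum_sub_distrib]

theorem frobeniusPairing_smul_left (c : ℝ) (A X : Matrix m n ℝ) :
    frobeniusPairing (c • A) X = c * frobeniusPairing A X := by
  simp only [frobeniusPairing, smul_apply, smul_eq_mul, Finset.mul_sum, mul_assoc]

@[simp]
theorem frobeniusPairing_zero_left (X : Matrix m n ℝ) : frobeniusPairing 0 X = 0 := by
  simp [frobeniusPairing]

theorem sum_mul_mul_eq_frobeniusPairing_vecMulVec (A : Matrix m m ℝ) (x : m → ℝ) :
    ∑ i, ∑ j, x i * (A i j * x j) = frobeniusPairing A (vecMulVec x x) := by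
  simp only [frobeniusPairing, vecMulVec_apply]
  exact Finset.sum_congr rfl fun _ _ => Finset.sum_congr rfl fun _ _ => by ring

/-- Schur product theorem: `⟨A, X⟩ = 1ᵀ (A ⊙ X) 1`. -/
theorem PosSemidef.frobeniusPairing_nonneg {A X : Matrix m m ℝ} (hA : A.PosSemidef)
    (hX : X.PosSemidef) : 0 ≤ frobeniusPairing A X := by
  have h := (hA.hadamard hX).dotProduct_mulVec_nonneg 1
  simp only [star_one, mulVec, dotProduct, Pi.one_apply, mul_one, one_mul,
    hadamard_apply] at h
  exact h

theorem PosSemidef.toBlocks_add_sub_nonneg {Z : Matrix (m ⊕ m) (m ⊕ m) ℝ} (hZ : Z.PosSemidef) :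
    (Z.toBlocks₁₁ + Z.toBlocks₂₂ - (Z.toBlocks₁₂ + Z.toBlocks₂₁)).PosSemidef := by
  have h := hZ.conjTranspose_mul_mul_same (fromRows (1 : Matrix m m ℝ) (-1))
  rw [← fromBlocks_toBlocks Z] at h
  convert h using 1
  rw [conjTranspose_fromRows_eq_fromCols_conjTranspose, fromCols_mul_fromBlocks,
    fromCols_mul_fromRows]
  simp only [conjTranspose_one, conjTranspose_neg, one_mul, neg_one_mul, mul_one, mul_neg]
  abel

theorem frobeniusPairing_antidiag_le_max {A : Matrix m m ℝ} (hA : A.PosSemidef)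
    {Z : Matrix (m ⊕ m) (m ⊕ m) ℝ} (hZ : Z.PosSemidef) :
    frobeniusPairing (fromBlocks 0 ((1 / 2 : ℝ) • A) ((1 / 2 : ℝ) • A) 0) Z ≤
      max (frobeniusPairing A Z.toBlocks₁₁) (frobeniusPairing A Z.toBlocks₂₂) := by
  have h := hA.frobeniusPairing_nonneg hZ.toBlocks_add_sub_nonneg
  rw [frobeniusPairing_sub_right, frobeniusPairing_add_right, frobeniusPairing_add_right] at h
  rw [frobeniusPairing_fromBlocks, frobeniusPairing_smul_left, frobeniusPairing_smul_left,
    frobeniusPairing_zero_left, frobeniusPairing_zero_left]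
  linarith [le_max_left (frobeniusPairing A Z.toBlocks₁₁) (frobeniusPairing A Z.toBlocks₂₂),
    le_max_right (frobeniusPairing A Z.toBlocks₁₁) (frobeniusPairing A Z.toBlocks₂₂)]

theorem frobeniusPairing_antidiag_fromBlocks_self (A X : Matrix m m ℝ) :
    frobeniusPairing (fromBlocks 0 ((1 / 2 : ℝ) • A) ((1 / 2 : ℝ) • A) 0) (fromBlocks X X X X) =
      frobeniusPairing A X := by
  rw [frobeniusPairing_fromBlocks, frobeniusPairing_smul_left, frobeniusPairing_smul_left,
    frobeniusPairing_zero_left, frobeniusPairing_zero_left, toBlocks_fromBlocks₁₂,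
    toBlocks_fromBlocks₂₁]
  ring

end Matrix

open Matrix

section Elliptope

variable {m n : Type*} [Fintype m] [Fintype n]

theorem toBlocks₁₁_mem_elliptope {Z : Matrix (m ⊕ n) (m ⊕ n) ℝ} (hZ : Z ∈ elliptope (m ⊕ n)) :
    Z.toBlocks₁₁ ∈ elliptope m :=
  ⟨hZ.1.submatrix Sum.inl, fun i => hZ.2 (Sum.inl i)⟩

theorem toBlocks₂₂_mem_elliptope {Z : Matrix (m ⊕ n) (m ⊕ n) ℝ} (hZ : Z ∈ elliptope (m ⊕ n)) :
    Z.toBlocks₂₂ ∈ elliptope n :=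
  ⟨hZ.1.submatrix Sum.inr, fun i => hZ.2 (Sum.inr i)⟩

theorem fromBlocks_self_mem_elliptope {X : Matrix m m ℝ} (hX : X ∈ elliptope m) :
    fromBlocks X X X X ∈ elliptope (m ⊕ m) := by
  have h : fromBlocks X X X X = X.submatrix (Sum.elim id id) (Sum.elim id id) := by
    ext (i | i) (j | j) <;> rfl
  rw [h]
  exact ⟨hX.1.submatrix _, fun i => by cases i <;> exact hX.2 _⟩

end Elliptope

/-- for `A ⪰ 0` and `B = [[0, A/2],[A/2, 0]]`, the maxima of
`⟨B,Z⟩` over `𝓔_{2n}` and of `⟨A,X⟩` over `𝓔_n` coincide, and likewise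
for the ±1 quadratic maxima. -/
theorem block_matrix_lemma {n : ℕ} (A : Matrix (Fin n) (Fin n) ℝ)
    (hA : A.PosSemidef)
    (B : Matrix (Fin n ⊕ Fin n) (Fin n ⊕ Fin n) ℝ)
    (hB : B = Matrix.fromBlocks 0 ((1 / 2 : ℝ) • A) ((1 / 2 : ℝ) • A) 0) :
    sSup {t | ∃ Z ∈ elliptope (Fin n ⊕ Fin n), t = ∑ i, ∑ j, B i j * Z i j} =
      sSup {t | ∃ X ∈ elliptope (Fin n), t = ∑ i, ∑ j, A i j * X i j} ∧
    sSup {t | ∃ z : Fin n ⊕ Fin n → ℝ, (∀ i, z i = 1 ∨ z i = -1) ∧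
        t = ∑ i, ∑ j, z i * (B i j * z j)} =
      sSup {t | ∃ x : Fin n → ℝ, (∀ i, x i = 1 ∨ x i = -1) ∧
        t = ∑ i, ∑ j, x i * (A i j * x j)} := by
  subst hB
  refine ⟨csSup_eq_csSup_of_forall_exists_le ?_ ?_, csSup_eq_csSup_of_forall_exists_le ?_ ?_⟩
  · rintro _ ⟨Z, hZ, rfl⟩
    rcases le_max_iff.mp (frobeniusPairing_antidiag_le_max hA hZ.1) with h | h
    · exact ⟨_, ⟨_, toBlocks₁₁_mem_elliptope hZ, rfl⟩, h⟩
    · exact ⟨_, ⟨_, toBlocks₂₂_mem_elliptope hZ, rfl⟩, h⟩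
  · rintro _ ⟨X, hX, rfl⟩
    exact ⟨_, ⟨_, fromBlocks_self_mem_elliptope hX, rfl⟩,
      (frobeniusPairing_antidiag_fromBlocks_self A X).ge⟩
  · rintro _ ⟨z, hz, rfl⟩
    rw [sum_mul_mul_eq_frobeniusPairing_vecMulVec]
    -- the diagonal blocks of `z zᵀ` are definitionally `x xᵀ` and `y yᵀ` for `z = (x, y)`
    rcases le_max_iff.mp (frobeniusPairing_antidiag_le_max hA (posSemidef_vecMulVec_self_star z))
      with h | h
    · exact ⟨_, ⟨z ∘ Sum.inl, fun i => hz _,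
        (sum_mul_mul_eq_frobeniusPairing_vecMulVec A _).symm⟩, h⟩
    · exact ⟨_, ⟨z ∘ Sum.inr, fun i => hz _,
        (sum_mul_mul_eq_frobeniusPairing_vecMulVec A _).symm⟩, h⟩
  · rintro _ ⟨x, hx, rfl⟩
    refine ⟨_, ⟨Sum.elim x x, fun i => by cases i <;> exact hx _, rfl⟩, ?_⟩
    rw [sum_mul_mul_eq_frobeniusPairing_vecMulVec, sum_mul_mul_eq_frobeniusPairing_vecMulVec,
      vecMulVec_sumElim_self, frobeniusPairing_antidiag_fromBlocks_self]
end

section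
/- If the graph G is the clique k-sum of graphs G1 and G2 with k <= 3, then kappa(G) = max(kappa(G1), kappa(G2)). -/
open Finset Real
open scoped Classical Pointwise

/-
The inequality `κ(G₁), κ(G₂) ≤ κ(G₁ ⊔ G₂)` is monotonicity of `κ` under subgraphs: extend weights
by zero.

Conversely, split a weight `w` on `G₁ ⊔ G₂` into its part on `G₁` and the rest `w'`, carried by
`G₂`.
For signs `x` on the clique `C = V₁ ∩ V₂`, let `A x` and `B x` be the largest cut values of the
two parts over sign vectors extending `x`. Sign vectors on the two sides that agree on `C` glue
to one on `V₁ ∪ V₂`, so `A x + B x ≤ ip(G₁ ⊔ G₂, w)`. Now `(B - A) / 2` is an even function of at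
most three signs, hence a constant `g` plus a combination of the products `x i * x j` with
`i ≠ j ∈ C`, i.e. (up to `g`) the cut function of a weight `c` on the clique. Moving `c` from the
`G₂`-side to the `G₁`-side gives `ip(G₁, w + c) ≤ ip / 2 - g` and `ip(G₂, w' - c) ≤ ip / 2 + g`,
while `sdp` is subadditive along the split; so `sdp ≤ max κ(Gᵢ) · ip`.

Since `κ` is a supremum of ratios, one also needs some uniform bound `sdp ≤ K · ip`: the weight
`w i j` is the Fourier coefficient at `{i, j}` of the cut function, which has mean zero, and this
gives `|w i j| ≤ 2 ip(G, w)`.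
-/

lemma mul_le_abs_of_abs_le_one {a b : ℝ} (hb : |b| ≤ 1) : a * b ≤ |a| :=
  (le_abs_self _).trans <| by
    rw [abs_mul]; exact mul_le_of_le_one_right (abs_nonneg a) hb

section SignVec

variable {V : Type*}

def IsSignVec (x : V → ℝ) : Prop := ∀ i, x i = 1 ∨ x i = -1

lemma IsSignVec.neg {x : V → ℝ} (hx : IsSignVec x) : IsSignVec (-x) := fun i => by
  rcases hx i with h | h <;> simp [h]

lemma IsSignVec.mul_self {x : V → ℝ} (hx : IsSignVec x) (i : V) : x i * x i = 1 := by
  rcases hx i with h | h <;> simp [h]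

lemma IsSignVec.mul_eq_one_or {x : V → ℝ} (hx : IsSignVec x) (i j : V) :
    x i * x j = 1 ∨ x i * x j = -1 := by
  rcases hx i with h | h <;> rcases hx j with h' | h' <;> simp [h, h']

lemma IsSignVec.abs_mul_le_one {x : V → ℝ} (hx : IsSignVec x) (i j : V) :
    |x i * x j| ≤ 1 := by
  rcases hx.mul_eq_one_or i j with h | h <;> simp [h]

/-- Indexing sign vectors by the finite group `V → ℤˣ` makes a sign flip a translation. -/
def signVec (σ : V → ℤˣ) : V → ℝ := fun i => ((σ i : ℤ) : ℝ)

lemma isSignVec_signVec (σ : V → ℤˣ) : IsSignVec (signVec σ) := fun i => by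
  rcases Int.units_eq_one_or (σ i) with h | h <;> simp [signVec, h]

variable [DecidableEq V]

lemma signVec_mulSingle_mul (m : V) (σ : V → ℤˣ) (i : V) :
    signVec (Pi.mulSingle m (-1) * σ) i = if i = m then -signVec σ i else signVec σ i := by
  by_cases h : i = m
  · subst h; simp [signVec]
  · simp [signVec, h]

variable [Fintype V]

lemma sum_eq_zero_of_flip (m : V) {f : (V → ℤˣ) → ℝ}
    (hf : ∀ σ, f (Pi.mulSingle m (-1) * σ) = -f σ) : ∑ σ, f σ = 0 := by
  have h := Equiv.sum_comp (Equiv.mulLeft (Pi.mulSingle m (-1) : V → ℤˣ)) f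
  simp only [Equiv.coe_mulLeft, hf, Finset.sum_neg_distrib] at h
  linarith

lemma sum_signVec_mul {k l : V} (hkl : k ≠ l) : ∑ σ : V → ℤˣ, signVec σ k * signVec σ l = 0 :=
  sum_eq_zero_of_flip k fun σ => by simp [signVec_mulSingle_mul, hkl.symm]

end SignVec

section EdgeSum

variable {V : Type*} [Fintype V] [LinearOrder V]

lemma edgeSum_add (G : SimpleGraph V) (w w' y : V → V → ℝ) :
    edgeSum G (w + w') y = edgeSum G w y + edgeSum G w' y := by
  simp only [edgeSum, ← Finset.sum_add_distrib]
  congr! 2 with i _ j _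
  split_ifs <;> simp [add_mul]

lemma edgeSum_sub (G : SimpleGraph V) (w w' y : V → V → ℝ) :
    edgeSum G (w - w') y = edgeSum G w y - edgeSum G w' y := by
  simp only [edgeSum, ← Finset.sum_sub_distrib]
  congr! 2 with i _ j _
  split_ifs <;> simp [sub_mul]

lemma edgeSum_smul (G : SimpleGraph V) (a : ℝ) (w y : V → V → ℝ) :
    edgeSum G (a • w) y = a * edgeSum G w y := by
  simp only [edgeSum, Finset.mul_sum]
  congr! 2 with i _ j _
  split_ifs <;> simp [mul_assoc]

lemma edgeSum_zero (G : SimpleGraph V) (y : V → V → ℝ) : edgeSum G 0 y = 0 := by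
  simp [edgeSum]

lemma edgeSum_neg_gram (G : SimpleGraph V) (w : V → V → ℝ) (x : V → ℝ) :
    edgeSum G w (fun i j => (-x) i * (-x) j) = edgeSum G w (fun i j => x i * x j) := by
  simp [edgeSum]

lemma edgeSum_congr_graph {G H : SimpleGraph V} {w : V → V → ℝ}
    (h : ∀ i j, i < j → w i j ≠ 0 → (G.Adj i j ↔ H.Adj i j)) : edgeSum G w = edgeSum H w := by
  ext y
  refine Finset.sum_congr rfl fun i _ => Finset.sum_congr rfl fun j _ => ?_
  by_cases hw : i < j ∧ w i j ≠ 0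
  · simp only [h i j hw.1 hw.2]
  · rw [not_and_or, not_not] at hw
    rcases hw with hw | hw <;> simp [hw]

lemma edgeSum_extend_of_le {G H : SimpleGraph V} (hHG : H ≤ G) (w : V → V → ℝ) :
    edgeSum G (fun i j => if H.Adj i j then w i j else 0) = edgeSum H w := by
  ext y
  refine Finset.sum_congr rfl fun i _ => Finset.sum_congr rfl fun j _ => ?_
  by_cases hH : H.Adj i j
  · simp [hH, hHG hH]
  · simp [hH]

lemma edgeSum_sup (G₁ G₂ : SimpleGraph V) (w y : V → V → ℝ) :
    edgeSum (G₁ ⊔ G₂) w y =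
      edgeSum G₁ w y + edgeSum G₂ (fun i j => if G₁.Adj i j then 0 else w i j) y := by
  simp only [edgeSum, ← Finset.sum_add_distrib]
  congr! 2 with i _ j _
  by_cases h₁ : G₁.Adj i j <;> by_cases h₂ : G₂.Adj i j <;> simp [h₁, h₂]

lemma edgeSum_gram_congr {G : SimpleGraph V} {S : Finset V}
    (hS : ∀ i j, G.Adj i j → i ∈ S ∧ j ∈ S) (w : V → V → ℝ) {x x' : V → ℝ}
    (h : ∀ i ∈ S, x i = x' i) :
    edgeSum G w (fun i j => x i * x j) = edgeSum G w (fun i j => x' i * x' j) := by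
  refine Finset.sum_congr rfl fun i _ => Finset.sum_congr rfl fun j _ => ?_
  by_cases hij : i < j ∧ G.Adj i j
  · simp only [if_pos hij, h i (hS i j hij.2).1, h j (hS i j hij.2).2]
  · simp [hij]

lemma edgeSum_le_sum (G : SimpleGraph V) {w y b : V → V → ℝ} (hb : ∀ i j, 0 ≤ b i j)
    (h : ∀ i j, i < j → G.Adj i j → w i j * y i j ≤ b i j) :
    edgeSum G w y ≤ ∑ i, ∑ j, b i j := by
  refine Finset.sum_le_sum fun i _ => Finset.sum_le_sum fun j _ => ?_
  split_ifs with hij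
  · exact h i j hij.1 hij.2
  · exact hb i j

end EdgeSum

section IpVal

variable {V : Type*} [Fintype V] [LinearOrder V]

lemma bddAbove_ipVal_set (G : SimpleGraph V) (w : V → V → ℝ) :
    BddAbove {t | ∃ x : V → ℝ, (∀ i, x i = 1 ∨ x i = -1) ∧
      t = edgeSum G w (fun i j => x i * x j)} := by
  refine ⟨∑ i, ∑ j, |w i j|, ?_⟩
  rintro _ ⟨x, hx, rfl⟩
  exact edgeSum_le_sum G (fun _ _ => abs_nonneg _) fun i j _ _ =>
    mul_le_abs_of_abs_le_one (IsSignVec.abs_mul_le_one hx i j)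

lemma le_ipVal (G : SimpleGraph V) (w : V → V → ℝ) {x : V → ℝ} (hx : IsSignVec x) :
    edgeSum G w (fun i j => x i * x j) ≤ ipVal G w :=
  le_csSup (bddAbove_ipVal_set G w) ⟨x, hx, rfl⟩

lemma ipVal_le (G : SimpleGraph V) (w : V → V → ℝ) {b : ℝ}
    (h : ∀ x, IsSignVec x → edgeSum G w (fun i j => x i * x j) ≤ b) : ipVal G w ≤ b :=
  csSup_le ⟨_, 1, fun _ => Or.inl rfl, rfl⟩ fun _ ⟨x, hx, ht⟩ => ht ▸ h x hx

lemma sum_signVec_mul_mul {k l i j : V} (hkl : k < l) (hij : i < j) :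
    ∑ σ : V → ℤˣ, signVec σ k * signVec σ l * (signVec σ i * signVec σ j) =
      if k = i ∧ l = j then (Fintype.card (V → ℤˣ) : ℝ) else 0 := by
  split_ifs with h
  · obtain ⟨rfl, rfl⟩ := h
    have hsq (σ : V → ℤˣ) : signVec σ k * signVec σ l * (signVec σ k * signVec σ l) = 1 := by
      rw [mul_mul_mul_comm, (isSignVec_signVec σ).mul_self, (isSignVec_signVec σ).mul_self, one_mul]
    simp [hsq]
  -- some index occurs exactly once among `k, l, i, j`; flipping it changes the sign
  by_cases hk : k = i ∨ k = j
  · have hl : l ≠ i ∧ l ≠ j := by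
      constructor <;> rintro rfl <;> rcases hk with rfl | rfl
      exacts [hkl.ne rfl, hij.not_gt hkl, h ⟨rfl, rfl⟩, hkl.ne rfl]
    refine sum_eq_zero_of_flip l fun σ => ?_
    simp [signVec_mulSingle_mul, hkl.ne, hl.1.symm, hl.2.symm]
  · rw [not_or] at hk
    refine sum_eq_zero_of_flip k fun σ => ?_
    simp [signVec_mulSingle_mul, hkl.ne', Ne.symm hk.1, Ne.symm hk.2]

lemma sum_edgeSum_signVec (G : SimpleGraph V) (w : V → V → ℝ) :
    ∑ σ : V → ℤˣ, edgeSum G w (fun k l => signVec σ k * signVec σ l) = 0 := by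
  simp only [edgeSum]
  rw [Finset.sum_comm]
  refine Finset.sum_eq_zero fun k _ => ?_
  rw [Finset.sum_comm]
  refine Finset.sum_eq_zero fun l _ => ?_
  split_ifs with hkl
  · rw [← Finset.mul_sum, sum_signVec_mul hkl.1.ne, mul_zero]
  · exact Finset.sum_const_zero

lemma sum_edgeSum_mul_signVec (G : SimpleGraph V) (w : V → V → ℝ) {i j : V} (hij : i < j)
    (hadj : G.Adj i j) :
    ∑ σ : V → ℤˣ, edgeSum G w (fun k l => signVec σ k * signVec σ l) *
      (signVec σ i * signVec σ j) = Fintype.card (V → ℤˣ) * w i j := by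
  have hterm (k l : V) : ∑ σ : V → ℤˣ,
      (if k < l ∧ G.Adj k l then w k l * (signVec σ k * signVec σ l) else 0) *
        (signVec σ i * signVec σ j) =
      if k = i ∧ l = j then Fintype.card (V → ℤˣ) * w i j else 0 := by
    split_ifs with hedge hpair hpair
    · simp_rw [mul_assoc (w k l), ← Finset.mul_sum, sum_signVec_mul_mul hedge.1 hij, if_pos hpair]
      rw [hpair.1, hpair.2, mul_comm]
    · simp_rw [mul_assoc (w k l), ← Finset.mul_sum, sum_signVec_mul_mul hedge.1 hij, if_neg hpair,
        mul_zero]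
    · exact absurd (hpair.1 ▸ hpair.2 ▸ ⟨hij, hadj⟩) hedge
    · simp
  calc _ = ∑ k, ∑ l, ∑ σ : V → ℤˣ,
        (if k < l ∧ G.Adj k l then w k l * (signVec σ k * signVec σ l) else 0) *
          (signVec σ i * signVec σ j) := by
        simp only [edgeSum, Finset.sum_mul]
        rw [Finset.sum_comm]
        exact Finset.sum_congr rfl fun k _ => Finset.sum_comm
    _ = ∑ k, ∑ l, if k = i ∧ l = j then (Fintype.card (V → ℤˣ) : ℝ) * w i j else 0 := by
        simp only [hterm]
    _ = _ := by simp [ite_and]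

lemma ipVal_nonneg (G : SimpleGraph V) (w : V → V → ℝ) : 0 ≤ ipVal G w := by
  obtain ⟨σ, -, hσ⟩ := Finset.exists_le_of_sum_le Finset.univ_nonempty
    ((Finset.sum_const_zero).trans (sum_edgeSum_signVec G w).symm).le
  exact hσ.trans (le_ipVal G w (isSignVec_signVec σ))

lemma abs_le_two_mul_ipVal (G : SimpleGraph V) (w : V → V → ℝ) {i j : V} (hij : i < j)
    (hadj : G.Adj i j) : |w i j| ≤ 2 * ipVal G w := by
  set N : ℝ := (Fintype.card (V → ℤˣ) : ℝ)
  set F : (V → ℤˣ) → ℝ := fun σ => edgeSum G w (fun k l => signVec σ k * signVec σ l)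
  have hN : 0 < N := Nat.cast_pos.mpr Fintype.card_pos
  have hF (σ : V → ℤˣ) : |F σ| ≤ 2 * ipVal G w - F σ := by
    have := le_ipVal G w (isSignVec_signVec σ)
    rw [abs_le]; constructor <;> linarith [ipVal_nonneg G w]
  refine le_of_mul_le_mul_left ?_ hN
  calc N * |w i j| = |∑ σ, F σ * (signVec σ i * signVec σ j)| := by
        rw [sum_edgeSum_mul_signVec G w hij hadj, abs_mul, abs_of_pos hN]
    _ ≤ ∑ σ, |F σ| := by
        refine (Finset.abs_sum_le_sum_abs _ _).trans (Finset.sum_le_sum fun σ _ => ?_)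
        rw [abs_mul]
        exact mul_le_of_le_one_right (abs_nonneg _) ((isSignVec_signVec σ).abs_mul_le_one i j)
    _ ≤ ∑ σ, (2 * ipVal G w - F σ) := Finset.sum_le_sum fun σ _ => hF σ
    _ = N * (2 * ipVal G w) := by
        rw [Finset.sum_sub_distrib, sum_edgeSum_signVec, Finset.sum_const, nsmul_eq_mul]; simp [N]

end IpVal

section Kappa

variable {V : Type*} [Fintype V] [LinearOrder V]

lemma edgeSum_inner_le {E : Type*} [NormedAddCommGroup E] [InnerProductSpace ℝ E]
    (G : SimpleGraph V) (w : V → V → ℝ) {u : V → E} (hu : ∀ i, ‖u i‖ = 1) :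
    edgeSum G w (fun i j => inner ℝ (u i) (u j)) ≤ 2 * Fintype.card V ^ 2 * ipVal G w := by
  have hinner (i j : V) : |inner ℝ (u i) (u j)| ≤ 1 :=
    (abs_real_inner_le_norm _ _).trans_eq (by rw [hu i, hu j, one_mul])
  have h := edgeSum_le_sum G (b := fun _ _ => 2 * ipVal G w)
    (fun _ _ => mul_nonneg zero_le_two (ipVal_nonneg G w)) fun i j hij hadj =>
      (mul_le_abs_of_abs_le_one (hinner i j)).trans (abs_le_two_mul_ipVal G w hij hadj)
  simpa [Finset.sum_const, Finset.card_univ, pow_two, mul_assoc, mul_left_comm] using h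

lemma bddAbove_sdpVal_set (G : SimpleGraph V) (w : V → V → ℝ) :
    BddAbove {t | ∃ u : V → EuclideanSpace ℝ V, (∀ i, ‖u i‖ = 1) ∧
      t = edgeSum G w (fun i j => (inner ℝ (u i) (u j) : ℝ))} :=
  ⟨_, fun _ ⟨_, hu, ht⟩ => ht ▸ edgeSum_inner_le G w hu⟩

lemma le_sdpVal (G : SimpleGraph V) (w : V → V → ℝ) {u : V → EuclideanSpace ℝ V}
    (hu : ∀ i, ‖u i‖ = 1) : edgeSum G w (fun i j => inner ℝ (u i) (u j)) ≤ sdpVal G w :=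
  le_csSup (bddAbove_sdpVal_set G w) ⟨u, hu, rfl⟩

lemma sdpVal_le (G : SimpleGraph V) (w : V → V → ℝ) {b : ℝ}
    (h : ∀ u : V → EuclideanSpace ℝ V, (∀ i, ‖u i‖ = 1) →
      edgeSum G w (fun i j => inner ℝ (u i) (u j)) ≤ b) : sdpVal G w ≤ b :=
  csSup_le ⟨_, fun i => EuclideanSpace.single i 1, fun i => by simp, rfl⟩
    fun _ ⟨u, hu, ht⟩ => ht ▸ h u hu

lemma sdpVal_le_two_mul_card_sq_mul_ipVal (G : SimpleGraph V) (w : V → V → ℝ) :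
    sdpVal G w ≤ 2 * Fintype.card V ^ 2 * ipVal G w :=
  sdpVal_le G w fun _ hu => edgeSum_inner_le G w hu

lemma bddAbove_kappaVal_set (G : SimpleGraph V) :
    BddAbove {t | ∃ w : V → V → ℝ, t = sdpVal G w / ipVal G w} :=
  ⟨2 * Fintype.card V ^ 2, fun _ ⟨w, ht⟩ => ht ▸
    div_le_of_le_mul₀ (ipVal_nonneg G w) (by positivity) (sdpVal_le_two_mul_card_sq_mul_ipVal G w)⟩

lemma kappaVal_le_of_forall (G : SimpleGraph V) {K : ℝ} (hK : 0 ≤ K)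
    (h : ∀ w, sdpVal G w ≤ K * ipVal G w) : kappaVal G ≤ K :=
  csSup_le ⟨_, 0, rfl⟩ fun _ ⟨w, ht⟩ => ht ▸ div_le_of_le_mul₀ (ipVal_nonneg G w) hK (h w)

lemma kappaVal_nonneg (G : SimpleGraph V) : 0 ≤ kappaVal G := by
  have hip : ipVal G 0 = 0 :=
    (ipVal_le G 0 fun _ _ => (edgeSum_zero G _).le).antisymm (ipVal_nonneg G 0)
  exact le_csSup (bddAbove_kappaVal_set G) ⟨0, by rw [hip, div_zero]⟩

lemma sdpVal_le_kappaVal_mul_ipVal (G : SimpleGraph V) (w : V → V → ℝ) :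
    sdpVal G w ≤ kappaVal G * ipVal G w := by
  rcases (ipVal_nonneg G w).eq_or_lt with h | h
  · simpa [← h] using sdpVal_le_two_mul_card_sq_mul_ipVal G w
  · exact (div_le_iff₀ h).1 (le_csSup (bddAbove_kappaVal_set G) ⟨w, rfl⟩)

lemma kappaVal_mono {G H : SimpleGraph V} (hHG : H ≤ G) : kappaVal H ≤ kappaVal G := by
  refine csSup_le_csSup (bddAbove_kappaVal_set G) ⟨_, 0, rfl⟩ ?_
  rintro _ ⟨w, rfl⟩
  exact ⟨fun i j => if H.Adj i j then w i j else 0, by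
    simp only [sdpVal, ipVal, edgeSum_extend_of_le hHG]⟩

lemma sdpVal_le_max_mul_ipVal_of_split {G G₁ G₂ : SimpleGraph V} {w w₁ w₂ : V → V → ℝ}
    (hsplit : ∀ y, edgeSum G w y = edgeSum G₁ w₁ y + edgeSum G₂ w₂ y)
    (hip : ipVal G₁ w₁ + ipVal G₂ w₂ ≤ ipVal G w) :
    sdpVal G w ≤ max (kappaVal G₁) (kappaVal G₂) * ipVal G w := by
  set K := max (kappaVal G₁) (kappaVal G₂)
  have hK : 0 ≤ K := (kappaVal_nonneg G₁).trans (le_max_left _ _)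
  calc sdpVal G w ≤ sdpVal G₁ w₁ + sdpVal G₂ w₂ := sdpVal_le G w fun u hu =>
        (hsplit _).trans_le (add_le_add (le_sdpVal G₁ w₁ hu) (le_sdpVal G₂ w₂ hu))
    _ ≤ kappaVal G₁ * ipVal G₁ w₁ + kappaVal G₂ * ipVal G₂ w₂ :=
        add_le_add (sdpVal_le_kappaVal_mul_ipVal G₁ w₁) (sdpVal_le_kappaVal_mul_ipVal G₂ w₂)
    _ ≤ K * ipVal G₁ w₁ + K * ipVal G₂ w₂ :=
        add_le_add (mul_le_mul_of_nonneg_right (le_max_left _ _) (ipVal_nonneg G₁ w₁))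
          (mul_le_mul_of_nonneg_right (le_max_right _ _) (ipVal_nonneg G₂ w₂))
    _ ≤ K * ipVal G w := by
        rw [← mul_add]; exact mul_le_mul_of_nonneg_left hip hK

end Kappa

lemma exists_bilinear_eq (Φ : ℝ → ℝ → ℝ) : ∃ g α β γ : ℝ, ∀ s t : ℝ, (s = 1 ∨ s = -1) →
    (t = 1 ∨ t = -1) → Φ s t = g + α * s + β * t + γ * (s * t) :=
  ⟨(Φ 1 1 + Φ 1 (-1) + Φ (-1) 1 + Φ (-1) (-1)) / 4,
    (Φ 1 1 + Φ 1 (-1) - Φ (-1) 1 - Φ (-1) (-1)) / 4,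
    (Φ 1 1 - Φ 1 (-1) + Φ (-1) 1 - Φ (-1) (-1)) / 4,
    (Φ 1 1 - Φ 1 (-1) - Φ (-1) 1 + Φ (-1) (-1)) / 4, by rintro s t (rfl | rfl) (rfl | rfl) <;> ring⟩

section EvenFunctions

variable {V : Type*}

lemma exists_eq_add_pairwise_of_even {D : (V → ℝ) → ℝ} {C : Finset V} {a b c : V}
    (hC : ∀ i ∈ C, i = a ∨ i = b ∨ i = c) (hloc : ∀ x y, (∀ i ∈ C, x i = y i) → D x = D y)
    (heven : ∀ x, D (-x) = D x) :
    ∃ g α β γ : ℝ, ∀ x, IsSignVec x →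
      D x = g + α * (x a * x b) + β * (x a * x c) + γ * (x b * x c) := by
  obtain ⟨g, α, β, γ, hΦ⟩ := exists_bilinear_eq fun s t =>
    D fun i => if i = a then 1 else if i = b then s else if i = c then t else 1
  refine ⟨g, α, β, γ, fun x hx => ?_⟩
  have hsq := hx.mul_self a
  -- normalising `x a` to `1` by evenness leaves only the products `x a * x b` and `x a * x c`
  have hnorm : D x = D fun i => x a * x i := by
    rcases hx a with h | h
    · simp [h]
    · rw [← heven]; congr 1; ext i; simp [h]
  rw [hnorm, hloc _ _ fun i hi => ?_, hΦ _ _ (hx.mul_eq_one_or a b) (hx.mul_eq_one_or a c)]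
  · linear_combination (γ * x b * x c) * hsq
  rcases hC i hi with rfl | rfl | rfl <;> split_ifs <;> subst_vars <;> simp_all

noncomputable def pairWeight (p q : V) : V → V → ℝ :=
  fun i j => if s(i, j) = s(p, q) then 1 else 0

lemma exists_subset_triple {C : Finset V} (hne : C.Nonempty) (hk : C.card ≤ 3) :
    ∃ a ∈ C, ∃ b ∈ C, ∃ c ∈ C, ∀ i ∈ C, i = a ∨ i = b ∨ i = c := by
  obtain h | h | h : C.card = 1 ∨ C.card = 2 ∨ C.card = 3 := by have := hne.card_pos; omega
  · obtain ⟨a, rfl⟩ := Finset.card_eq_one.1 h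
    exact ⟨a, by simp, a, by simp, a, by simp, by simp⟩
  · obtain ⟨a, b, -, rfl⟩ := Finset.card_eq_two.1 h
    exact ⟨a, by simp, b, by simp, b, by simp, by simp⟩
  · obtain ⟨a, b, c, -, -, -, rfl⟩ := Finset.card_eq_three.1 h
    exact ⟨a, by simp, b, by simp, c, by simp, by simp⟩

end EvenFunctions

section CliqueSum

variable {V : Type*} [Fintype V] [LinearOrder V]

lemma edgeSum_pairWeight_of_lt (G : SimpleGraph V) {p q : V} (hpq : p < q) (hadj : G.Adj p q)
    (y : V → V → ℝ) : edgeSum G (pairWeight p q) y = y p q := by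
  have hterm (i j : V) : (if i < j ∧ G.Adj i j then pairWeight p q i j * y i j else 0) =
      if i = p ∧ j = q then y p q else 0 := by
    by_cases h : i = p ∧ j = q
    · obtain ⟨rfl, rfl⟩ := h
      simp [pairWeight, hpq, hadj]
    · rw [if_neg h]
      split_ifs with hij <;> simp only [pairWeight, Sym2.eq_iff]
      · rw [if_neg, zero_mul]
        rintro (h' | ⟨rfl, rfl⟩)
        exacts [h h', hpq.not_gt hij.1]
  simp only [edgeSum, hterm]
  simp [ite_and]

lemma edgeSum_pairWeight_self (G : SimpleGraph V) (p : V) (y : V → V → ℝ) :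
    edgeSum G (pairWeight p p) y = 0 := by
  refine Finset.sum_eq_zero fun i _ => Finset.sum_eq_zero fun j _ => ?_
  split_ifs with hij
  · rw [pairWeight, if_neg, zero_mul]
    rw [Sym2.eq_iff]
    rintro (⟨rfl, rfl⟩ | ⟨rfl, rfl⟩) <;> exact lt_irrefl _ hij.1
  · rfl

lemma edgeSum_pairWeight_gram (G : SimpleGraph V) {p q : V} (hpq : p ≠ q → G.Adj p q)
    {x : V → ℝ} (hx : IsSignVec x) :
    edgeSum G (pairWeight p q) (fun i j => x i * x j) = x p * x q - if p = q then 1 else 0 := by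
  rcases lt_trichotomy p q with h | rfl | h
  · rw [edgeSum_pairWeight_of_lt G h (hpq h.ne), if_neg h.ne, sub_zero]
  · rw [edgeSum_pairWeight_self, if_pos rfl, hx.mul_self, sub_self]
  · have hswap : pairWeight p q = pairWeight q p := by
      ext i j; rw [pairWeight, pairWeight, Sym2.eq_swap (a := p)]
    rw [hswap, edgeSum_pairWeight_of_lt G h (hpq h.ne').symm, if_neg h.ne', sub_zero, mul_comm]

lemma exists_clique_weight {G : SimpleGraph V} {C : Finset V} (hC : G.IsClique (C : Set V))
    (hk : C.card ≤ 3) {D : (V → ℝ) → ℝ} (hloc : ∀ x y, (∀ i ∈ C, x i = y i) → D x = D y)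
    (heven : ∀ x, D (-x) = D x) :
    ∃ c : V → V → ℝ, (∀ i j, c i j ≠ 0 → i ∈ C ∧ j ∈ C) ∧
      ∃ g : ℝ, ∀ x, IsSignVec x → edgeSum G c (fun i j => x i * x j) = D x - g := by
  rcases C.eq_empty_or_nonempty with rfl | hne
  · exact ⟨0, by simp, D 0, fun x _ => by rw [edgeSum_zero, hloc x 0 (by simp), sub_self]⟩
  obtain ⟨a, ha, b, hb, c, hc, hsub⟩ := exists_subset_triple hne hk
  obtain ⟨g, α, β, γ, hD⟩ := exists_eq_add_pairwise_of_even hsub hloc heven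
  have hadj {p q : V} (hp : p ∈ C) (hq : q ∈ C) : p ≠ q → G.Adj p q := hC hp hq
  refine ⟨α • pairWeight a b + β • pairWeight a c + γ • pairWeight b c, fun i j hne => ?_,
    g + α * (if a = b then 1 else 0) + β * (if a = c then 1 else 0) + γ * (if b = c then 1 else 0),
    fun x hx => ?_⟩
  · by_contra hij
    have hz {p q : V} (hp : p ∈ C) (hq : q ∈ C) : pairWeight p q i j = 0 := by
      refine if_neg fun h => hij ?_
      rcases Sym2.eq_iff.1 h with ⟨rfl, rfl⟩ | ⟨rfl, rfl⟩ <;> exact ⟨‹_›, ‹_›⟩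
    simp [hz ha hb, hz ha hc, hz hb hc] at hne
  · rw [edgeSum_add, edgeSum_add, edgeSum_smul, edgeSum_smul, edgeSum_smul,
      edgeSum_pairWeight_gram G (hadj ha hb) hx, edgeSum_pairWeight_gram G (hadj ha hc) hx,
      edgeSum_pairWeight_gram G (hadj hb hc) hx, hD x hx]
    ring

noncomputable def condIpVal (G : SimpleGraph V) (w : V → V → ℝ) (C : Finset V) (x : V → ℝ) : ℝ :=
  sSup {t | ∃ y : V → ℝ, IsSignVec y ∧ (∀ i ∈ C, y i = x i) ∧
    t = edgeSum G w (fun i j => y i * y j)}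

lemma le_condIpVal (G : SimpleGraph V) (w : V → V → ℝ) (C : Finset V) {x : V → ℝ}
    (hx : IsSignVec x) : edgeSum G w (fun i j => x i * x j) ≤ condIpVal G w C x := by
  refine le_csSup ?_ ⟨x, hx, fun _ _ => rfl, rfl⟩
  refine (bddAbove_ipVal_set G w).mono ?_
  rintro _ ⟨y, hy, -, rfl⟩
  exact ⟨y, hy, rfl⟩

lemma condIpVal_le (G : SimpleGraph V) (w : V → V → ℝ) (C : Finset V) {x : V → ℝ}
    (hx : IsSignVec x) {b : ℝ}
    (h : ∀ y, IsSignVec y → (∀ i ∈ C, y i = x i) → edgeSum G w (fun i j => y i * y j) ≤ b) :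
    condIpVal G w C x ≤ b :=
  csSup_le ⟨_, x, hx, fun _ _ => rfl, rfl⟩ fun _ ⟨y, hy, hyx, ht⟩ => ht ▸ h y hy hyx

lemma condIpVal_congr (G : SimpleGraph V) (w : V → V → ℝ) (C : Finset V) {x x' : V → ℝ}
    (h : ∀ i ∈ C, x i = x' i) : condIpVal G w C x = condIpVal G w C x' := by
  have hiff (y : V → ℝ) : (∀ i ∈ C, y i = x i) ↔ ∀ i ∈ C, y i = x' i :=
    forall₂_congr fun i hi => by rw [h i hi]
  simp only [condIpVal, hiff]

lemma condIpVal_neg (G : SimpleGraph V) (w : V → V → ℝ) (C : Finset V) (x : V → ℝ) :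
    condIpVal G w C (-x) = condIpVal G w C x := by
  simp only [condIpVal]
  congr 1
  ext t
  constructor <;> rintro ⟨y, hy, hyx, rfl⟩ <;>
    refine ⟨-y, hy.neg, fun i hi => ?_, (edgeSum_neg_gram G w y).symm⟩ <;> simp [hyx i hi]

lemma condIpVal_add_condIpVal_le {G₁ G₂ : SimpleGraph V} {V₁ V₂ : Finset V}
    (hE₁ : ∀ i j, G₁.Adj i j → i ∈ V₁ ∧ j ∈ V₁) (hE₂ : ∀ i j, G₂.Adj i j → i ∈ V₂ ∧ j ∈ V₂)
    (w : V → V → ℝ) {x : V → ℝ} (hx : IsSignVec x) :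
    condIpVal G₁ w (V₁ ∩ V₂) x +
        condIpVal G₂ (fun i j => if G₁.Adj i j then 0 else w i j) (V₁ ∩ V₂) x ≤
      ipVal (G₁ ⊔ G₂) w := by
  rw [← le_sub_iff_add_le]
  refine condIpVal_le G₁ w _ hx fun y₁ hy₁ h₁ => ?_
  rw [le_sub_comm]
  refine condIpVal_le G₂ _ _ hx fun y₂ hy₂ h₂ => ?_
  rw [le_sub_iff_add_le']
  set z : V → ℝ := fun i => if i ∈ V₁ then y₁ i else y₂ i
  have hz : IsSignVec z := fun i => by by_cases hi : i ∈ V₁ <;> simp [z, hi, hy₁ i, hy₂ i]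
  have hz₂ (i : V) (hi : i ∈ V₂) : z i = y₂ i := by
    by_cases hi₁ : i ∈ V₁
    · simp [z, hi₁, h₁ i (Finset.mem_inter.2 ⟨hi₁, hi⟩), h₂ i (Finset.mem_inter.2 ⟨hi₁, hi⟩)]
    · simp [z, hi₁]
  rw [edgeSum_gram_congr hE₁ w fun i hi => (if_pos hi : z i = y₁ i).symm,
    edgeSum_gram_congr hE₂ _ fun i hi => (hz₂ i hi).symm, ← edgeSum_sup]
  exact le_ipVal _ w hz

lemma exists_split_of_cliqueSum {G₁ G₂ : SimpleGraph V} {V₁ V₂ : Finset V}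
    (hE₁ : ∀ i j, G₁.Adj i j → i ∈ V₁ ∧ j ∈ V₁) (hE₂ : ∀ i j, G₂.Adj i j → i ∈ V₂ ∧ j ∈ V₂)
    (hclique₁ : G₁.IsClique ↑(V₁ ∩ V₂)) (hclique₂ : G₂.IsClique ↑(V₁ ∩ V₂))
    (hk : (V₁ ∩ V₂).card ≤ 3) (w : V → V → ℝ) :
    ∃ w₁ w₂ : V → V → ℝ, (∀ y, edgeSum (G₁ ⊔ G₂) w y = edgeSum G₁ w₁ y + edgeSum G₂ w₂ y) ∧
      ipVal G₁ w₁ + ipVal G₂ w₂ ≤ ipVal (G₁ ⊔ G₂) w := by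
  set C := V₁ ∩ V₂
  set w₂ : V → V → ℝ := fun i j => if G₁.Adj i j then 0 else w i j
  set A := condIpVal G₁ w C
  set B := condIpVal G₂ w₂ C
  -- `c` shifts `(B - A) / 2` from the `G₂`-side to the `G₁`-side: both then peak at `(A + B) / 2`
  obtain ⟨c, hc, g, hcg⟩ := exists_clique_weight hclique₁ hk (D := fun x => (B x - A x) / 2)
    (fun x y h => by simp only [A, B, condIpVal_congr _ _ _ h])
    (fun x => by simp only [A, B, condIpVal_neg])
  have hc₁₂ : edgeSum G₁ c = edgeSum G₂ c := edgeSum_congr_graph fun i j hij hne =>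
    iff_of_true (hclique₁ (hc i j hne).1 (hc i j hne).2 hij.ne)
      (hclique₂ (hc i j hne).1 (hc i j hne).2 hij.ne)
  refine ⟨w + c, w₂ - c, fun y => ?_, ?_⟩
  · rw [edgeSum_sup, edgeSum_add, edgeSum_sub, hc₁₂]
    ring
  have hglue := fun x (hx : IsSignVec x) => condIpVal_add_condIpVal_le hE₁ hE₂ w hx
  have h₁ : ipVal G₁ (w + c) ≤ ipVal (G₁ ⊔ G₂) w / 2 - g := ipVal_le _ _ fun x hx => by
    rw [edgeSum_add, hcg x hx]
    linarith [le_condIpVal G₁ w C hx, hglue x hx]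
  have h₂ : ipVal G₂ (w₂ - c) ≤ ipVal (G₁ ⊔ G₂) w / 2 + g := ipVal_le _ _ fun x hx => by
    rw [edgeSum_sub, ← hc₁₂, hcg x hx]
    linarith [le_condIpVal G₂ w₂ C hx, hglue x hx]
  linarith

end CliqueSum

theorem kappa_clique_sum_general {n : ℕ} (G₁ G₂ : SimpleGraph (Fin n))
    (V₁ V₂ : Finset (Fin n))
    (hE₁ : ∀ i j, G₁.Adj i j → i ∈ V₁ ∧ j ∈ V₁)
    (hE₂ : ∀ i j, G₂.Adj i j → i ∈ V₂ ∧ j ∈ V₂)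
    (hclique₁ : G₁.IsClique ↑(V₁ ∩ V₂)) (hclique₂ : G₂.IsClique ↑(V₁ ∩ V₂))
    (hk : (V₁ ∩ V₂).card ≤ 3) :
    kappaVal (G₁ ⊔ G₂) = max (kappaVal G₁) (kappaVal G₂) := by
  refine le_antisymm (kappaVal_le_of_forall _ ((kappaVal_nonneg G₁).trans (le_max_left _ _))
    fun w => ?_) (max_le (kappaVal_mono le_sup_left) (kappaVal_mono le_sup_right))
  obtain ⟨w₁, w₂, hsplit, hip⟩ := exists_split_of_cliqueSum hE₁ hE₂ hclique₁ hclique₂ hk w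
  exact sdpVal_le_max_mul_ipVal_of_split hsplit hip

/-- if `G` is the clique `k`-sum of `G₁` and `G₂` with `k ≤ 3`,
then `κ(G) = max(κ(G₁), κ(G₂))`. -/
theorem kappa_clique_sum {n : ℕ} (G₁ G₂ : SimpleGraph (Fin n))
    (V₁ V₂ : Finset (Fin n))
    (hV : V₁ ∪ V₂ = Finset.univ)
    (hE₁ : ∀ i j, G₁.Adj i j → i ∈ V₁ ∧ j ∈ V₁)
    (hE₂ : ∀ i j, G₂.Adj i j → i ∈ V₂ ∧ j ∈ V₂)
    (hclique₁ : G₁.IsClique ↑(V₁ ∩ V₂)) (hclique₂ : G₂.IsClique ↑(V₁ ∩ V₂))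
    (hk : (V₁ ∩ V₂).card ≤ 3) :
    kappaVal (G₁ ⊔ G₂) = max (kappaVal G₁) (kappaVal G₂) :=
  kappa_clique_sum_general G₁ G₂ V₁ V₂ hE₁ hE₂ hclique₁ hclique₂ hk
end

section
/- Let C_p be the circuit (cycle graph) of length p and let c in [-1,1]. The constant vector c·e (all edge entries equal to c) belongs to the elliptope E(C_p) if and only if either p is even, or p is odd and c >= -cos(pi/p). -/
open Finset Real
open scoped Classical Pointwise

/-- The cycle graph `C_p` on `Fin p`, with edges `(i, i+1 mod p)`. -/
def cycleGraph (p : ℕ) : SimpleGraph (Fin p) :=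
  SimpleGraph.fromRel (fun i j => j.val = (i.val + 1) % p)

/-!
If `X` is the Gram matrix of unit vectors `v i`, then `arccos (X i j)` is the angle between `v i`
and `v j`, and angles obey the triangle inequality. Along an odd cycle whose edge angles all equal
`α = arccos c`, flipping the sign of every second vector turns each edge angle into `π - α`, while
one turn around the cycle carries `v 0` to `-v 0`; hence `π ≤ p (π - α)`, i.e. `-cos (π / p) ≤ c`.
Conversely, the powers of `exp (θ * I)` realise the edge value `cos θ` on `C_p` whenever `p θ` is
a multiple of `2π`; `θ = π` for even `p` and `θ = π - π / p` for odd `p` attain the bound, and the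
admissible constants form a convex set containing `1`.
-/

open InnerProductGeometry Matrix

/-- The constants `c` with `c • e ∈ 𝓔(G)`. -/
def constEdgeCorrelations {V : Type*} [Fintype V] (G : SimpleGraph V) : Set ℝ :=
  {c | ∃ X ∈ elliptope V, ∀ i j, G.Adj i j → X i j = c}

section Elliptope

variable {n : Type*} [Fintype n]

theorem gram_mem_elliptope {E : Type*} [NormedAddCommGroup E] [InnerProductSpace ℝ E]
    {v : n → E} (hv : ∀ i, ‖v i‖ = 1) : gram ℝ v ∈ elliptope n :=
  ⟨posSemidef_gram ℝ v, fun i => by simp [hv]⟩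

open scoped MatrixOrder in
theorem exists_gram_eq_of_mem_elliptope {X : Matrix n n ℝ} (hX : X ∈ elliptope n) :
    ∃ v : n → EuclideanSpace ℝ n, (∀ i, ‖v i‖ = 1) ∧ gram ℝ v = X := by
  obtain ⟨B, hB⟩ := CStarAlgebra.nonneg_iff_eq_star_mul_self.mp hX.1.nonneg
  let v : n → EuclideanSpace ℝ n := fun j => WithLp.toLp 2 fun i => B i j
  have hgram : gram ℝ v = X := by
    rw [gram_eq_conjTranspose_mul (EuclideanSpace.basisFun n ℝ), hB]
    rfl
  refine ⟨v, fun i => ?_, hgram⟩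
  have hii : ‖v i‖ ^ 2 = 1 := by
    rw [← real_inner_self_eq_norm_sq, ← gram_apply, hgram, hX.2]
  exact (pow_eq_one_iff_of_nonneg (norm_nonneg _) two_ne_zero).1 hii

theorem convex_elliptope : Convex ℝ (elliptope n) := by
  rintro X ⟨hX, hXd⟩ Y ⟨hY, hYd⟩ a b ha hb hab
  exact ⟨(hX.smul ha).add (hY.smul hb), fun i => by simp [hXd, hYd, hab]⟩

end Elliptope

section ConstEdgeCorrelations

variable {V : Type*} [Fintype V] (G : SimpleGraph V)

theorem convex_constEdgeCorrelations : Convex ℝ (constEdgeCorrelations G) := by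
  rintro c ⟨X, hX, hXc⟩ d ⟨Y, hY, hYd⟩ a b ha hb hab
  exact ⟨a • X + b • Y, convex_elliptope hX hY ha hb hab,
    fun i j h => by simp [hXc i j h, hYd i j h]⟩

theorem one_mem_constEdgeCorrelations : 1 ∈ constEdgeCorrelations G :=
  ⟨gram ℝ fun _ => (1 : ℝ), gram_mem_elliptope (by simp), fun _ _ _ => by simp⟩

theorem Icc_subset_constEdgeCorrelations {a : ℝ} (ha : a ∈ constEdgeCorrelations G) :
    Set.Icc a 1 ⊆ constEdgeCorrelations G :=
  (convex_constEdgeCorrelations G).ordConnected.out ha (one_mem_constEdgeCorrelations G)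

end ConstEdgeCorrelations

theorem cycleGraph_adj_add_one {p : ℕ} [NeZero p] (hp : 2 ≤ p) (i : Fin p) :
    (cycleGraph p).Adj i (i + 1) := by
  rw [cycleGraph, SimpleGraph.fromRel_adj]
  have h1 : ((1 : Fin p) : ℕ) = 1 := Nat.mod_eq_of_lt hp
  refine ⟨fun h => ?_, Or.inl (by rw [Fin.val_add, h1])⟩
  have h10 : (1 : Fin p) ≠ 0 := by rw [Ne, Fin.ext_iff, h1, Fin.val_zero]; exact one_ne_zero
  exact left_ne_add.2 h10 h

theorem angle_le_sum_range_angle {E : Type*} [NormedAddCommGroup E] [InnerProductSpace ℝ E]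
    {w : ℕ → E} (h0 : w 0 ≠ 0) (n : ℕ) :
    angle (w 0) (w n) ≤ ∑ k ∈ range n, angle (w k) (w (k + 1)) := by
  induction n with
  | zero => simp [angle_self h0]
  | succ n ih =>
    rw [sum_range_succ]
    linarith [angle_le_angle_add_angle (w 0) (w n) (w (n + 1))]

open Fin.NatCast in
theorem pi_le_mul_pi_sub_of_odd_cycle {E : Type*} [NormedAddCommGroup E]
    [InnerProductSpace ℝ E] {p : ℕ} (hp : 2 ≤ p) (hodd : Odd p) {v : Fin p → E}
    (hv : ∀ i, v i ≠ 0) {α : ℝ} (hα : ∀ i j, (cycleGraph p).Adj i j → angle (v i) (v j) = α) :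
    π ≤ p * (π - α) := by
  have : NeZero p := ⟨by omega⟩
  set w : ℕ → E := fun k => (-1 : ℝ) ^ k • v (k : Fin p) with hw
  have hstep : ∀ k, angle (w k) (w (k + 1)) = π - α := by
    intro k
    simp only [hw, pow_succ, mul_neg_one, neg_smul, angle_neg_right, Nat.cast_succ]
    rw [angle_smul_smul (by simp), hα _ _ (cycleGraph_adj_add_one hp _)]
  calc π = angle (w 0) (w p) := by simp [hw, hodd.neg_one_pow, angle_self_neg_of_nonzero (hv 0)]
    _ ≤ ∑ k ∈ range p, angle (w k) (w (k + 1)) :=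
      angle_le_sum_range_angle (by simpa [hw] using hv 0) p
    _ = p * (π - α) := by simp [hstep, mul_sub]

theorem cos_mem_constEdgeCorrelations_cycleGraph {p m : ℕ} {θ : ℝ} (hθ : p * θ = 2 * π * m) :
    cos θ ∈ constEdgeCorrelations (cycleGraph p) := by
  set ζ : ℂ := Complex.exp (θ * Complex.I)
  have hζ : ‖ζ‖ = 1 := Complex.norm_exp_ofReal_mul_I θ
  have hζp : ζ ^ p = 1 := by
    rw [← Complex.exp_nat_mul, ← mul_assoc, ← Complex.ofReal_natCast, ← Complex.ofReal_mul, hθ]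
    push_cast
    rw [← Complex.exp_nat_mul_two_pi_mul_I m]
    ring_nf
  have hstep : ∀ i j : Fin p, (j : ℕ) = (i + 1) % p →
      inner ℝ (ζ ^ (i : ℕ)) (ζ ^ (j : ℕ)) = cos θ := by
    intro i j h
    rw [h, ← pow_eq_pow_mod _ hζp, pow_succ, Complex.inner, mul_comm _ ζ, mul_assoc,
      mul_comm (ζ ^ (i : ℕ)), Complex.conj_mul', norm_pow, hζ]
    simp [ζ, Complex.exp_ofReal_mul_I_re]
  refine ⟨gram ℝ fun i : Fin p => ζ ^ (i : ℕ), gram_mem_elliptope (by simp [hζ]), ?_⟩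
  intro i j hij
  obtain ⟨-, h | h⟩ := (SimpleGraph.fromRel_adj _ _ _).1 hij
  · exact hstep i j h
  · rw [gram_apply, real_inner_comm]
    exact hstep j i h

theorem neg_cos_pi_div_le_of_mem_constEdgeCorrelations_cycleGraph {p : ℕ} (hp : 2 ≤ p)
    (hodd : Odd p) {c : ℝ} (hc : c ∈ Set.Icc (-1 : ℝ) 1)
    (h : c ∈ constEdgeCorrelations (cycleGraph p)) : -cos (π / p) ≤ c := by
  obtain ⟨X, hX, hXc⟩ := h
  obtain ⟨v, hv, rfl⟩ := exists_gram_eq_of_mem_elliptope hX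
  have hangle : ∀ i j, (cycleGraph p).Adj i j → angle (v i) (v j) = arccos c := by
    intro i j hij
    rw [angle, hv, hv, mul_one, div_one, ← hXc i j hij, gram_apply]
  have hbound := pi_le_mul_pi_sub_of_odd_cycle hp hodd
    (fun i => norm_ne_zero_iff.1 (by simp [hv])) hangle
  have harccos : arccos c ≤ π - π / p := by
    rw [le_sub_comm, div_le_iff₀ (by positivity)]
    linarith
  calc -cos (π / p) = cos (π - π / p) := (cos_pi_sub _).symm
    _ ≤ cos (arccos c) :=
      cos_le_cos_of_nonneg_of_le_pi (arccos_nonneg c) (sub_le_self _ (by positivity)) harccos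
    _ = c := cos_arccos hc.1 hc.2

/-- for `c ∈ [-1,1]`, the constant vector `c·e` lies in the
elliptope `𝓔(C_p)` iff `p` is even, or `p` is odd and `c ≥ -cos(π/p)`. -/
theorem const_mem_elliptope_cycle_iff (p : ℕ) (hp : 3 ≤ p) (c : ℝ)
    (hc : c ∈ Set.Icc (-1 : ℝ) 1) :
    (∃ X : Matrix (Fin p) (Fin p) ℝ, X.PosSemidef ∧ (∀ i, X i i = 1) ∧
        ∀ i j, (cycleGraph p).Adj i j → X i j = c) ↔
    (Even p ∨ (Odd p ∧ -Real.cos (π / p) ≤ c)) := by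
  simp only [← and_assoc]
  change c ∈ constEdgeCorrelations (cycleGraph p) ↔ _
  rcases Nat.even_or_odd p with ⟨m, rfl⟩ | hodd
  · have hπ : cos π ∈ constEdgeCorrelations (cycleGraph (m + m)) :=
      cos_mem_constEdgeCorrelations_cycleGraph (m := m) (by push_cast; ring)
    rw [cos_pi] at hπ
    exact iff_of_true (Icc_subset_constEdgeCorrelations _ hπ hc) (Or.inl ⟨m, rfl⟩)
  · obtain ⟨m, hm⟩ := id hodd
    have hθ : cos (π - π / p) ∈ constEdgeCorrelations (cycleGraph p) :=
      cos_mem_constEdgeCorrelations_cycleGraph (m := m) (by field_simp; rw [hm]; push_cast; ring)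
    rw [cos_pi_sub] at hθ
    refine ⟨fun h => Or.inr ⟨hodd, ?_⟩, ?_⟩
    · exact neg_cos_pi_div_le_of_mem_constEdgeCorrelations_cycleGraph (by omega) hodd hc h
    rintro (heven | ⟨-, hge⟩)
    · exact absurd heven (Nat.not_even_iff_odd.2 hodd)
    · exact Icc_subset_constEdgeCorrelations _ hθ ⟨hge, hc.2⟩
end

section
/- For the circuit C_n with n odd, sdp(C_n, -e) = n·cos(pi/n), i.e., the maximum over unit vectors u_1,...,u_n in R^n of -sum over cycle edges (i,i+1) of <u_i, u_{i+1}> equals n·cos(pi/n). -/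
open Finset Real
open scoped Classical Pointwise

/-!
Flipping the sign of every other vector turns `-⟪u i, u (i + 1)⟫` into `cos θᵢ`, where the `θᵢ`
are the angles between consecutive vectors of a walk on the sphere which, since `n` is odd, runs
from `u 0` to `-u 0`; by the triangle inequality for angles, `∑ θᵢ ≥ π`. Jensen's inequality for
`cos` on `[0, π / 2]` then gives `∑ cos θᵢ ≤ n cos (π / n)`; an obtuse `θᵢ`, and the case `n = 3`,
are handled by direct estimates. Equality holds for the points at angles `i (π - π / n)` on a
great circle.
-/

open InnerProductGeometry
open scoped RealInnerProductSpace

section Trigonometry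

theorem cos_add_cos_add_cos_le {a b c : ℝ} (ha : a ≤ π) (hb : b ≤ π) (hc : c ≤ π)
    (habc : π ≤ a + b + c) :
    cos a + cos b + cos c ≤ 3 / 2 := by
  rcases le_or_gt π (a + b) with hab | hab
  · have : cos b ≤ -cos a := by
      rw [← cos_pi_sub]; exact cos_le_cos_of_nonneg_of_le_pi (by linarith) hb (by linarith)
    linarith [cos_le_one c]
  · have hc' : cos c ≤ -cos (a + b) := by
      rw [← cos_pi_sub]; exact cos_le_cos_of_nonneg_of_le_pi (by linarith) hc (by linarith)
    -- with `x = cos ((a + b) / 2)`, `y = cos ((a - b) / 2)`, the left side is at most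
    -- `2 x y - (2 x ^ 2 - 1) ≤ 3 / 2`
    have hsum := cos_add_cos a b
    have hdouble : cos (a + b) = 2 * cos ((a + b) / 2) ^ 2 - 1 := by
      rw [← cos_two_mul]; ring_nf
    have hy := cos_sq_le_one ((a - b) / 2)
    nlinarith [sq_nonneg (2 * cos ((a + b) / 2) - cos ((a - b) / 2))]

variable {ι : Type*} {s : Finset ι} {θ : ι → ℝ}

theorem sum_cos_le_card_mul_cos_of_le_pi_div_two (hs : s.Nonempty) (h0 : ∀ i ∈ s, 0 ≤ θ i)
    (h1 : ∀ i ∈ s, θ i ≤ π / 2) (hsum : π ≤ ∑ i ∈ s, θ i) :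
    ∑ i ∈ s, cos (θ i) ≤ #s * cos (π / #s) := by
  have hcard : (0 : ℝ) < #s := by exact_mod_cast hs.card_pos
  have jensen := strictConcaveOn_cos_Icc.concaveOn.le_map_sum (t := s)
    (w := fun _ => 1 / (#s : ℝ)) (p := θ) (fun _ _ => by positivity) (by simp [field])
    (fun i hi => ⟨by linarith [h0 i hi, pi_pos], h1 i hi⟩)
  simp only [smul_eq_mul, ← mul_sum] at jensen
  have hmean : 1 / (#s : ℝ) * ∑ i ∈ s, θ i ≤ π := by
    rw [div_mul_eq_mul_div, one_mul, div_le_iff₀ hcard]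
    calc ∑ i ∈ s, θ i ≤ ∑ _i ∈ s, π / 2 := sum_le_sum h1
      _ ≤ π * #s := by rw [sum_const, nsmul_eq_mul]; nlinarith [pi_pos]
  have hmono : cos (1 / (#s : ℝ) * ∑ i ∈ s, θ i) ≤ cos (π / #s) :=
    cos_le_cos_of_nonneg_of_le_pi (by positivity) hmean
      (by rw [div_mul_eq_mul_div, one_mul]; gcongr)
  calc ∑ i ∈ s, cos (θ i) = #s * (1 / (#s : ℝ) * ∑ i ∈ s, cos (θ i)) := by field_simp
    _ ≤ #s * cos (π / #s) := by gcongr; exact jensen.trans hmono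

theorem sub_one_le_mul_cos_pi_div {n : ℕ} (hn : 5 ≤ n) : (n : ℝ) - 1 ≤ n * cos (π / n) := by
  have hn' : (5 : ℝ) ≤ n := by exact_mod_cast hn
  have hquad := mul_le_mul_of_nonneg_left (one_sub_sq_div_two_le_cos (x := π / n))
    (by positivity : (0 : ℝ) ≤ n)
  have hexpand : (n : ℝ) * (1 - (π / n) ^ 2 / 2) = n - π ^ 2 / (2 * n) := by field_simp
  have hsmall : π ^ 2 / (2 * n) ≤ 1 := by
    rw [div_le_one (by positivity)]
    nlinarith [pi_lt_d2, pi_pos]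
  linarith

theorem sum_cos_le_card_mul_cos_pi_div_card (hs : #s = 3 ∨ 5 ≤ #s) (h0 : ∀ i ∈ s, 0 ≤ θ i)
    (hπ : ∀ i ∈ s, θ i ≤ π) (hsum : π ≤ ∑ i ∈ s, θ i) :
    ∑ i ∈ s, cos (θ i) ≤ #s * cos (π / #s) := by
  rcases hs with h3 | h5
  · obtain ⟨x, y, z, hxy, hxz, hyz, rfl⟩ := card_eq_three.mp h3
    simp only [mem_insert, mem_singleton, forall_eq_or_imp, forall_eq] at hπ
    rw [sum_insert (by simp [hxy, hxz]), sum_insert (by simp [hyz]), sum_singleton] at hsum ⊢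
    rw [h3, Nat.cast_ofNat, cos_pi_div_three]
    linarith [cos_add_cos_add_cos_le hπ.1 hπ.2.1 hπ.2.2 (by linarith)]
  · by_cases hsmall : ∀ i ∈ s, θ i ≤ π / 2
    · exact sum_cos_le_card_mul_cos_of_le_pi_div_two (card_pos.mp (by omega)) h0 hsmall hsum
    push Not at hsmall
    obtain ⟨j, hj, hjbig⟩ := hsmall
    have hcosj : cos (θ j) ≤ 0 :=
      cos_nonpos_of_pi_div_two_le_of_le hjbig.le (by linarith [hπ j hj, pi_pos])
    have hrest : ∑ i ∈ s.erase j, cos (θ i) ≤ #s - 1 := by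
      calc ∑ i ∈ s.erase j, cos (θ i) ≤ #(s.erase j) • (1 : ℝ) :=
            sum_le_card_nsmul _ _ 1 fun i _ => cos_le_one _
        _ = #s - 1 := by
            rw [card_erase_of_mem hj, nsmul_eq_mul, mul_one, Nat.cast_sub (by omega)]
            norm_num
    rw [← add_sum_erase s _ hj]
    linarith [sub_one_le_mul_cos_pi_div h5]

end Trigonometry

section SphericalGeometry

variable {E : Type*} [NormedAddCommGroup E] [InnerProductSpace ℝ E]

theorem angle_le_sum_angle_succ (v : ℕ → E) {k : ℕ} (hk : 0 < k) :
    angle (v 0) (v k) ≤ ∑ i ∈ range k, angle (v i) (v (i + 1)) := by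
  induction k, hk using Nat.le_induction with
  | base => simp
  | succ k _ ih =>
    rw [sum_range_succ]
    linarith [angle_le_angle_add_angle (v 0) (v k) (v (k + 1))]

theorem pi_le_sum_angle_neg_succ {n : ℕ} (hn : Odd n) {w : ℕ → E} (hw : w n = w 0)
    (h0 : w 0 ≠ 0) : π ≤ ∑ m ∈ range n, angle (w m) (-w (m + 1)) := by
  -- flipping every other vector turns the walk into one from `w 0` to `-w 0`
  have hchain := angle_le_sum_angle_succ (fun m => (-1 : ℝ) ^ m • w m) hn.pos
  have hflip (m : ℕ) :
      angle ((-1 : ℝ) ^ m • w m) ((-1 : ℝ) ^ (m + 1) • w (m + 1)) = angle (w m) (-w (m + 1)) := by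
    rw [pow_succ, mul_neg_one, neg_smul, ← smul_neg, angle_smul_smul (by positivity)]
  simpa only [hflip, pow_zero, one_smul, hn.neg_one_pow, neg_one_smul, hw,
    angle_self_neg_of_nonzero h0] using hchain

theorem inner_cos_smul_add_sin_smul {ι : Type*} {e : ι → E} (he : Orthonormal ℝ e) {i j : ι}
    (hij : i ≠ j) (s t : ℝ) :
    ⟪cos s • e i + sin s • e j, cos t • e i + sin t • e j⟫ = cos (s - t) := by
  simp only [inner_add_left, inner_add_right, real_inner_smul_left, real_inner_smul_right,
    inner_self_eq_one_of_norm_eq_one (he.1 _), he.2 hij, he.2 hij.symm, cos_sub]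
  ring

theorem exists_periodic_unit_walk_inner_eq {ι : Type*} {e : ι → E} (he : Orthonormal ℝ e)
    {i j : ι} (hij : i ≠ j) {n : ℕ} (hn : Odd n) :
    ∃ p : ℕ → E, (∀ m, ‖p m‖ = 1) ∧ Function.Periodic p n ∧
      ∀ m, ⟪p m, p (m + 1)⟫ = -cos (π / n) := by
  obtain ⟨k, rfl⟩ := hn
  -- consecutive points are `π - π / n` apart on a great circle, and `n` steps wind `k` times
  set α := π - π / (2 * k + 1 : ℕ)
  have hnα : ((2 * k + 1 : ℕ) : ℝ) * α = k * (2 * π) := by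
    simp only [α]; push_cast; field_simp; ring
  refine ⟨fun m => cos (m * α) • e i + sin (m * α) • e j, fun m => ?_, fun m => ?_,
    fun m => ?_⟩ <;> dsimp only
  · rw [norm_eq_sqrt_real_inner, inner_cos_smul_add_sin_smul he hij, sub_self, cos_zero, sqrt_one]
  · rw [Nat.cast_add, add_mul, hnα, cos_add_nat_mul_two_pi, sin_add_nat_mul_two_pi]
  · rw [inner_cos_smul_add_sin_smul he hij]
    simp only [α, Nat.cast_add, Nat.cast_one, sub_add_cancel_left, add_mul, one_mul, cos_neg,
      cos_pi_sub]

theorem neg_sum_inner_succ_le {n : ℕ} (hn : 3 ≤ n) (hodd : Odd n) {w : ℕ → E}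
    (hw : ∀ m, ‖w m‖ = 1) (hper : w n = w 0) :
    -∑ m ∈ range n, ⟪w m, w (m + 1)⟫ ≤ n * cos (π / n) := by
  have hcos (m : ℕ) : -⟪w m, w (m + 1)⟫ = cos (angle (w m) (-w (m + 1))) := by
    rw [← inner_neg_right, ← cos_angle_mul_norm_mul_norm, norm_neg, hw, hw, mul_one, mul_one]
  have hcard : #(range n) = 3 ∨ 5 ≤ #(range n) := by
    obtain ⟨k, rfl⟩ := hodd
    rw [card_range]
    omega
  have hw0 : w 0 ≠ 0 := norm_ne_zero_iff.mp (by simp [hw])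
  rw [← sum_neg_distrib, sum_congr rfl fun m _ => hcos m]
  simpa using sum_cos_le_card_mul_cos_pi_div_card hcard (fun _ _ => angle_nonneg _ _)
    (fun _ _ => angle_le_pi _ _) (pi_le_sum_angle_neg_succ hodd hper hw0)

end SphericalGeometry

/-- for the odd circuit `C_n`, `sdp(C_n, -e) = n·cos(π/n)`. -/
theorem sdp_cycle_neg_ones (n : ℕ) (hn : 3 ≤ n) (hodd : Odd n) :
    IsGreatest {t : ℝ | ∃ u : Fin n → EuclideanSpace ℝ (Fin n),
      (∀ i, ‖u i‖ = 1) ∧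
      t = -∑ i : Fin n,
        (inner ℝ (u i) (u ⟨(i.val + 1) % n, Nat.mod_lt _ (by omega)⟩) : ℝ)}
      ((n : ℝ) * Real.cos (π / n)) := by
  constructor
  · obtain ⟨p, hp, hperiodic, hinner⟩ := exists_periodic_unit_walk_inner_eq
      (EuclideanSpace.basisFun (Fin n) ℝ).orthonormal (i := ⟨0, by omega⟩) (j := ⟨1, by omega⟩)
      (by simp) hodd
    refine ⟨fun i => p i, fun i => hp i, ?_⟩
    simp only [hperiodic.map_mod_nat, hinner, sum_const, card_univ, Fintype.card_fin,
      nsmul_eq_mul]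
    ring
  · rintro t ⟨u, hu, rfl⟩
    let w (m : ℕ) := u ⟨m % n, Nat.mod_lt _ (by omega)⟩
    have hsum : ∑ i : Fin n, ⟪u i, u ⟨(i.val + 1) % n, Nat.mod_lt _ (by omega)⟩⟫ =
        ∑ m ∈ range n, ⟪w m, w (m + 1)⟫ := by
      rw [← Fin.sum_univ_eq_sum_range (fun m => ⟪w m, w (m + 1)⟫)]
      simp only [w, Nat.mod_eq_of_lt (Fin.is_lt _)]
    rw [hsum]
    exact neg_sum_inner_succ_le hn hodd (fun m => hu _) (by simp [w])
end

section
/- The function f(n) = (n/(n-2))·cos(pi/n) is monotone nonincreasing for integers n >= 3. -/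
/-!
Clearing denominators, the claim for `n = x` reads
`(x + 1)(x - 2) cos (π / (x + 1)) ≤ x (x - 1) cos (π / x)`, i.e.
`x (x - 1) (cos a - cos b) ≤ 2 cos a` with `a = π / (x + 1)`, `b = π / x`.
Bounding `cos a - cos b ≤ (b² - a²) / 2` (from `sin t ≤ t`) and `cos a ≥ 1 - a² / 2` reduces this
to the polynomial inequality `π² (2x² + x - 1) ≤ 4x (x + 1)²`, which holds for `x ≥ 4` as `π² < 10`.
The case `n = 3` is `√2 ≤ 3 / 2`.
-/

open Real

namespace Real

/-- Since `t - sin t ≥ 0` on `[0, ∞)`, the function `t ↦ t ^ 2 / 2 + cos t` is monotone there. -/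
theorem cos_sub_cos_le_sq_sub_sq_div_two {a b : ℝ} (ha : 0 ≤ a) (hab : a ≤ b) :
    cos a - cos b ≤ (b ^ 2 - a ^ 2) / 2 := by
  have hmono : MonotoneOn (fun t : ℝ => t ^ 2 / 2 + cos t) (Set.Ici 0) := by
    refine monotoneOn_of_deriv_nonneg (convex_Ici 0) (by fun_prop) (by fun_prop) ?_
    intro t ht
    rw [interior_Ici, Set.mem_Ioi] at ht
    rw [(((hasDerivAt_pow 2 t).div_const 2).fun_add (hasDerivAt_cos t)).deriv]
    norm_num
    linarith [sin_le ht.le]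
  have h := hmono ha (ha.trans hab) hab
  simp only at h
  linarith

end Real

theorem pi_sq_mul_le_of_four_le {x : ℝ} (hx : 4 ≤ x) :
    π ^ 2 * (2 * x ^ 2 + x - 1) ≤ 4 * x * (x + 1) ^ 2 := by
  have hπ : π ^ 2 < 10 := by nlinarith [pi_pos, pi_lt_d2]
  nlinarith [mul_nonneg (sub_nonneg.2 hx) (sub_nonneg.2 hx)]

theorem mul_cos_pi_div_succ_le_of_four_le {x : ℝ} (hx : 4 ≤ x) :
    (x + 1) * (x - 2) * cos (π / (x + 1)) ≤ x * (x - 1) * cos (π / x) := by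
  set a := π / (x + 1)
  set b := π / x
  have hx0 : 0 < x := by linarith
  have ha : 0 ≤ a := by positivity
  have hab : a ≤ b := div_le_div_of_nonneg_left pi_pos.le hx0 (by linarith)
  have hcos_sub : x * (x - 1) * (cos a - cos b) ≤ x * (x - 1) * ((b ^ 2 - a ^ 2) / 2) :=
    mul_le_mul_of_nonneg_left (cos_sub_cos_le_sq_sub_sq_div_two ha hab) (by nlinarith)
  have hcos_a : 2 - π ^ 2 / (x + 1) ^ 2 ≤ 2 * cos a := by
    have := one_sub_sq_div_two_le_cos (x := a)
    rw [div_pow] at this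
    linarith
  have hpoly : x * (x - 1) * ((b ^ 2 - a ^ 2) / 2) ≤ 2 - π ^ 2 / (x + 1) ^ 2 := by
    have := pi_sq_mul_le_of_four_le hx
    simp only [a, b, div_pow]
    rw [← sub_nonneg]
    have key : 2 - π ^ 2 / (x + 1) ^ 2 - x * (x - 1) * ((π ^ 2 / x ^ 2 - π ^ 2 / (x + 1) ^ 2) / 2)
        = (4 * x * (x + 1) ^ 2 - π ^ 2 * (2 * x ^ 2 + x - 1)) / (2 * x * (x + 1) ^ 2) := by
      field_simp
      ring
    rw [key]
    apply div_nonneg <;> [linarith; positivity]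
  linarith

/-- `(n/(n-2))·cos(π/n)` is monotone nonincreasing for
integers `n ≥ 3`. -/
theorem cycle_constant_antitone (n : ℕ) (hn : 3 ≤ n) :
    (((n : ℝ) + 1) / ((n : ℝ) - 1)) * Real.cos (π / ((n : ℝ) + 1)) ≤
      ((n : ℝ) / ((n : ℝ) - 2)) * Real.cos (π / (n : ℝ)) := by
  rcases hn.eq_or_lt with rfl | h4
  · have hsqrt : √2 ≤ 3 / 2 := by
      rw [sqrt_le_left (by norm_num)]; norm_num
    norm_num [cos_pi_div_four, cos_pi_div_three]
    linarith
  · have hx : (4 : ℝ) ≤ n := by exact_mod_cast h4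
    rw [div_mul_eq_mul_div, div_mul_eq_mul_div, div_le_div_iff₀ (by linarith) (by linarith)]
    have := mul_cos_pi_div_succ_le_of_four_le hx
    linarith
end

section
/- For the pure clique-web inequality with parameters p, q, r (p - q = 2r + 1, q >= 2, n = p + q), the SDP value at w = -e on the support graph CW^r_p satisfies sdp(CW^r_p, -e) <= q(r+1) + (2r+1)^2/2, and hence the integrality gap kappa(CW^r_p, -e) <= 1 + (2r+1)^2/(q(2r+2)). -/
/-!
For symmetric `F` on `n` vertices,
`2 · edgeSum G (-e) F = Σᵢ Fᵢᵢ + Σ_{Gᶜ-adjacent i, j} Fᵢⱼ - Σᵢⱼ Fᵢⱼ`: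
at `w = -e` the objective is `-x(Kₙ)` plus the edges of the complement. For the Gram matrix
of unit vectors the diagonal is `n`, each entry is at most `1`, and `Σᵢⱼ Fᵢⱼ = ‖Σᵢ uᵢ‖² ≥ 0`,
so `sdp(G, -e) ≤ n / 2 + |E(Gᶜ)|`. The complement of `CW^r_p` is the antiweb `AW^r_p` on the
last `p` vertices, a `2r`-regular circulant graph with `pr` edges, and
`n / 2 + pr = q(r+1) + (2r+1)² / 2`. The cut separating the clique from the web cuts no
antiweb edge and has `Σᵢ xᵢ = q - p = -(2r+1)`, so its value is exactly `q(r+1)`, a lower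
bound for `ip(G, -e)`.
-/

open Finset Real
open scoped Classical Pointwise

/-- The clique-web support graph `CW^r_p`: a clique on the first `q` vertices,
a complete bipartite graph to the last `p` vertices, and the web `W^r_p`
(complement of the antiweb, i.e. cyclic distance `> r`) on the last `p`. -/
def cwGraph (p q r : ℕ) : SimpleGraph (Fin (q + p)) :=
  SimpleGraph.fromRel (fun i j =>
    i.val < q ∨ j.val < q ∨
      (r < ((i.val - q) + p - (j.val - q)) % p ∧
       r < ((j.val - q) + p - (i.val - q)) % p))

open SimpleGraph

section EdgeSum

variable {V : Type*} [Fintype V]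

theorem sum_sum_ite_adj_one (G : SimpleGraph V) [DecidableRel G.Adj] :
    ∑ i, ∑ j, (if G.Adj i j then (1 : ℝ) else 0) = 2 * #G.edgeFinset := by
  simp only [sum_boole, ← neighborFinset_eq_filter, card_neighborFinset_eq_degree]
  exact_mod_cast sum_degrees_eq_twice_card_edges G

theorem sum_sum_eq_diag_add_adj_add_compl_adj [DecidableEq V] (G : SimpleGraph V)
    [DecidableRel G.Adj] (F : V → V → ℝ) :
    ∑ i, ∑ j, F i j = ∑ i, F i i + ∑ i, ∑ j, (if G.Adj i j then F i j else 0) +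
      ∑ i, ∑ j, (if Gᶜ.Adj i j then F i j else 0) := by
  have split (i j : V) : F i j = (if i = j then F i j else 0) +
      (if G.Adj i j then F i j else 0) + (if Gᶜ.Adj i j then F i j else 0) := by
    by_cases hij : i = j
    · simp [hij]
    · by_cases h : G.Adj i j <;> simp [hij, h]
  rw [sum_congr rfl fun i _ => sum_congr rfl fun j _ => split i j]
  simp only [sum_add_distrib, sum_ite_eq, mem_univ, if_true]

variable [LinearOrder V]

theorem sum_adj_eq_two_mul_sum_lt_adj (G : SimpleGraph V) {F : V → V → ℝ}
    (hF : ∀ i j, F i j = F j i) :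
    ∑ i, ∑ j, (if G.Adj i j then F i j else 0) =
      2 * ∑ i, ∑ j, if i < j ∧ G.Adj i j then F i j else 0 := by
  have split (i j : V) : (if G.Adj i j then F i j else 0) =
      (if i < j ∧ G.Adj i j then F i j else 0) + (if j < i ∧ G.Adj j i then F j i else 0) := by
    by_cases h : G.Adj i j
    · rcases lt_or_gt_of_ne h.ne with hij | hij <;>
        simp [h, h.symm, hij, hij.not_gt, hF i j]
    · simp [h, G.adj_comm j i]
  simp_rw [split, sum_add_distrib]
  rw [sum_comm (f := fun i j => if j < i ∧ G.Adj j i then F j i else 0), two_mul]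

theorem two_mul_edgeSum_neg_one (G : SimpleGraph V) {F : V → V → ℝ}
    (hF : ∀ i j, F i j = F j i) :
    2 * edgeSum G (fun _ _ => -1) F = ∑ i, F i i +
      ∑ i, ∑ j, (if Gᶜ.Adj i j then F i j else 0) - ∑ i, ∑ j, F i j := by
  have h := sum_adj_eq_two_mul_sum_lt_adj G hF
  have : edgeSum G (fun _ _ => -1) F = -∑ i, ∑ j, if i < j ∧ G.Adj i j then F i j else 0 := by
    simp only [edgeSum, ← sum_neg_distrib, neg_one_mul, neg_ite, neg_zero]
  rw [this, sum_sum_eq_diag_add_adj_add_compl_adj G F, h]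
  ring

theorem edgeSum_neg_one_inner_le {E : Type*} [NormedAddCommGroup E]
    [InnerProductSpace ℝ E] (G : SimpleGraph V) {u : V → E} (hu : ∀ i, ‖u i‖ = 1) :
    edgeSum G (fun _ _ => -1) (fun i j => inner ℝ (u i) (u j)) ≤
      Fintype.card V / 2 + #Gᶜ.edgeFinset := by
  have h := two_mul_edgeSum_neg_one G (F := fun i j => inner ℝ (u i) (u j)) fun i j =>
    real_inner_comm _ _
  have hdiag : ∑ i, inner ℝ (u i) (u i) = (Fintype.card V : ℝ) := by
    simp [hu]
  have hcompl : ∑ i, ∑ j, (if Gᶜ.Adj i j then inner ℝ (u i) (u j) else 0) ≤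
      ∑ i, ∑ j, (if Gᶜ.Adj i j then (1 : ℝ) else 0) := by
    gcongr with i _ j _
    split_ifs
    · simpa [hu] using real_inner_le_norm (u i) (u j)
    · rfl
  have hgram : 0 ≤ ∑ i, ∑ j, inner ℝ (u i) (u j) := by
    have := real_inner_self_nonneg (x := ∑ i, u i)
    rw [sum_inner] at this
    simpa only [inner_sum] using this
  rw [sum_sum_ite_adj_one] at hcompl
  linarith

theorem sdpVal_neg_one_le (G : SimpleGraph V) :
    sdpVal G (fun _ _ => -1) ≤ Fintype.card V / 2 + #Gᶜ.edgeFinset :=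
  Real.sSup_le (by rintro _ ⟨u, hu, rfl⟩; exact edgeSum_neg_one_inner_le G hu) (by positivity)

theorem edgeSum_le_ipVal (G : SimpleGraph V) (w : V → V → ℝ) {x : V → ℝ}
    (hx : ∀ i, x i = 1 ∨ x i = -1) :
    edgeSum G w (fun i j => x i * x j) ≤ ipVal G w := by
  refine le_csSup ⟨∑ i, ∑ j, |w i j|, ?_⟩ ⟨x, hx, rfl⟩
  rintro _ ⟨y, hy, rfl⟩
  unfold edgeSum
  have habs (i j : V) : |y i * y j| = 1 := by
    rcases hy i with h | h <;> rcases hy j with h' | h' <;> simp [h, h']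
  gcongr with i _ j _
  split_ifs
  · calc w i j * (y i * y j) ≤ |w i j * (y i * y j)| := le_abs_self _
      _ = |w i j| := by rw [abs_mul, habs, mul_one]
  · exact abs_nonneg _

theorem two_mul_edgeSum_neg_one_of_compl_adj (G : SimpleGraph V) {x : V → ℝ}
    (hx : ∀ i, x i = 1 ∨ x i = -1) (hcompl : ∀ i j, Gᶜ.Adj i j → x i = x j) :
    2 * edgeSum G (fun _ _ => -1) (fun i j => x i * x j) =
      Fintype.card V + 2 * #Gᶜ.edgeFinset - (∑ i, x i) ^ 2 := by
  have hsq (i : V) : x i * x i = 1 := by rcases hx i with h | h <;> simp [h]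
  have hcompl' : ∑ i, ∑ j, (if Gᶜ.Adj i j then x i * x j else 0) =
      ∑ i, ∑ j, (if Gᶜ.Adj i j then (1 : ℝ) else 0) := by
    refine sum_congr rfl fun i _ => sum_congr rfl fun j _ => ?_
    split_ifs with h
    · rw [← hcompl i j h, hsq]
    · rfl
  rw [two_mul_edgeSum_neg_one G fun i j => mul_comm _ _, hcompl', sum_sum_ite_adj_one, sq,
    sum_mul_sum]
  simp [hsq]

end EdgeSum

section Antiweb

variable {p r : ℕ} [NeZero p]

abbrev antiweb (p r : ℕ) [NeZero p] : SimpleGraph (Fin p) :=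
  circulantGraph (Fin.val ⁻¹' Set.Icc 1 r)

theorem antiweb_adj_zero_iff (hr : r < p) (d : Fin p) :
    (antiweb p r).Adj 0 d ↔ (d : ℕ) ∈ Icc 1 r ∪ Icc (p - r) (p - 1) := by
  have := d.isLt
  by_cases hd : d = 0
  · subst hd
    simp only [SimpleGraph.irrefl, Fin.val_zero, mem_union, mem_Icc, false_iff]
    omega
  · have : (d : ℕ) ≠ 0 := Fin.val_ne_zero_iff.2 hd
    simp only [circulantGraph_adj, Ne.symm hd, zero_sub, sub_zero, Fin.val_neg, hd, if_false,
      Set.mem_preimage, Set.mem_Icc, mem_union, mem_Icc, not_false_eq_true, true_and]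
    omega

theorem antiweb_degree_zero (hr : 2 * r < p) : (antiweb p r).degree 0 = 2 * r := by
  rw [← card_neighborFinset_eq_degree, neighborFinset_eq_filter, ← card_map Fin.valEmbedding]
  have hval : ({d | (antiweb p r).Adj 0 d} : Finset (Fin p)).map Fin.valEmbedding =
      Icc 1 r ∪ Icc (p - r) (p - 1) := by
    ext k
    simp only [mem_map, mem_filter, mem_univ, true_and, Fin.valEmbedding_apply]
    constructor
    · rintro ⟨d, hd, rfl⟩
      exact (antiweb_adj_zero_iff (by omega) d).1 hd
    · intro hk
      have hkp : k < p := by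
        simp only [mem_union, mem_Icc] at hk
        omega
      exact ⟨⟨k, hkp⟩, (antiweb_adj_zero_iff (by omega) _).2 hk, rfl⟩
  have hdisj : Disjoint (Icc 1 r) (Icc (p - r) (p - 1)) :=
    disjoint_left.2 fun k h₁ h₂ => by
      simp only [mem_Icc] at h₁ h₂
      omega
  rw [hval, card_union_of_disjoint hdisj, Nat.card_Icc, Nat.card_Icc]
  omega

theorem antiweb_degree (hr : 2 * r < p) (a : Fin p) : (antiweb p r).degree a = 2 * r := by
  rw [← antiweb_degree_zero hr, ← card_neighborFinset_eq_degree,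
    ← card_neighborFinset_eq_degree]
  refine card_equiv (Equiv.subRight a) fun b => ?_
  simp only [mem_neighborFinset, Equiv.subRight_apply]
  simpa only [zero_add, sub_add_cancel] using
    circulantGraph_adj_translate (s := Fin.val ⁻¹' Set.Icc 1 r) (u := 0) (v := b - a) (d := a)

theorem antiweb_card_edgeFinset (hr : 2 * r < p) : #(antiweb p r).edgeFinset = p * r := by
  have := sum_degrees_eq_twice_card_edges (antiweb p r)
  simp only [antiweb_degree hr, sum_const, card_univ, Fintype.card_fin, smul_eq_mul] at this
  linarith

end Antiweb

section CliqueWeb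

variable {p q r : ℕ}

theorem le_of_cwGraph_compl_adj {i j : Fin (q + p)} (h : (cwGraph p q r)ᶜ.Adj i j) :
    q ≤ (i : ℕ) := by
  by_contra hi
  simp [cwGraph, not_le.1 hi] at h

theorem cwGraph_adj_natAdd [NeZero p] (a b : Fin p) :
    (cwGraph p q r).Adj (Fin.natAdd q a) (Fin.natAdd q b) ↔
      a ≠ b ∧ r < (a - b : Fin p).val ∧ r < (b - a : Fin p).val := by
  have := a.isLt
  have := b.isLt
  simp only [cwGraph, fromRel_adj, ne_eq, Fin.natAdd_inj, Fin.val_natAdd, Fin.val_sub,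
    Nat.add_sub_cancel_left, show (a : ℕ) + p - b = p - b + a by omega,
    show (b : ℕ) + p - a = p - a + b by omega, add_lt_iff_neg_left, not_lt_zero, false_or]
  tauto

theorem compl_cwGraph [NeZero p] :
    (cwGraph p q r)ᶜ = (antiweb p r).map (Fin.natAddEmb q) := by
  have le_of_map_adj {i j : Fin (q + p)} (h : ((antiweb p r).map (Fin.natAddEmb q)).Adj i j) :
      q ≤ (i : ℕ) := by
    obtain ⟨a, b, -, rfl, -⟩ := (map_adj _ _ _ _).1 h
    exact Nat.le_add_right q a
  ext i j
  induction i using Fin.addCases with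
  | left a =>
    exact iff_of_false (fun h => (le_of_cwGraph_compl_adj h).not_gt a.isLt)
      (fun h => (le_of_map_adj h).not_gt a.isLt)
  | right a =>
    induction j using Fin.addCases with
    | left b =>
      exact iff_of_false (fun h => (le_of_cwGraph_compl_adj h.symm).not_gt b.isLt)
        (fun h => (le_of_map_adj h.symm).not_gt b.isLt)
    | right b =>
      simp only [compl_adj, cwGraph_adj_natAdd, map_adj, Fin.natAddEmb_apply, Fin.natAdd_inj,
        exists_eq_right_right, exists_eq_right, circulantGraph_adj, Set.mem_preimage,
        Set.mem_Icc, ne_eq, not_and, not_lt, and_congr_right_iff]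
      intro hab
      have h₁ := Fin.val_ne_zero_iff.2 (sub_ne_zero.2 hab)
      have h₂ := Fin.val_ne_zero_iff.2 (sub_ne_zero.2 (Ne.symm hab))
      omega

theorem cwGraph_compl_card_edgeFinset (hr : 2 * r < p) :
    #(cwGraph p q r)ᶜ.edgeFinset = p * r := by
  have : NeZero p := ⟨by omega⟩
  rw [← antiweb_card_edgeFinset hr, ← card_edgeFinset_map (Fin.natAddEmb q) (antiweb p r)]
  congr!
  exact compl_cwGraph

def cliqueCut (p q : ℕ) (i : Fin (q + p)) : ℝ := if (i : ℕ) < q then 1 else -1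

theorem cliqueCut_eq_one_or_neg_one (i : Fin (q + p)) :
    cliqueCut p q i = 1 ∨ cliqueCut p q i = -1 := by
  unfold cliqueCut
  split_ifs <;> simp

theorem sum_cliqueCut : ∑ i, cliqueCut p q i = q - p := by
  simp [Fin.sum_univ_add, cliqueCut, sub_eq_add_neg]

theorem cwGraph_edgeSum_cliqueCut (hp : p = q + (2 * r + 1)) :
    edgeSum (cwGraph p q r) (fun _ _ => -1) (fun i j => cliqueCut p q i * cliqueCut p q j) =
      q * (r + 1) := by
  have h := two_mul_edgeSum_neg_one_of_compl_adj (cwGraph p q r) cliqueCut_eq_one_or_neg_one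
    fun i j hij => by
      simp [cliqueCut, not_lt.2 (le_of_cwGraph_compl_adj hij),
        not_lt.2 (le_of_cwGraph_compl_adj hij.symm)]
  rw [Fintype.card_fin, cwGraph_compl_card_edgeFinset (by omega), sum_cliqueCut] at h
  subst hp
  push_cast at h ⊢
  linarith

end CliqueWeb

/-- for the pure clique-web inequality (`p = q + 2r + 1`, `q ≥ 2`),
`sdp(CW^r_p, -e) ≤ q(r+1) + (2r+1)²/2`, hence
`κ(CW^r_p, -e) ≤ 1 + (2r+1)²/(q(2r+2))`. -/
theorem cliqueweb_sdp_bound (p q r : ℕ) (hp : p = q + (2 * r + 1)) (hq : 2 ≤ q) :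
    sdpVal (cwGraph p q r) (fun _ _ => (-1 : ℝ)) ≤
      (q : ℝ) * ((r : ℝ) + 1) + (2 * (r : ℝ) + 1) ^ 2 / 2 ∧
    sdpVal (cwGraph p q r) (fun _ _ => (-1 : ℝ)) /
        ipVal (cwGraph p q r) (fun _ _ => (-1 : ℝ)) ≤
      1 + (2 * (r : ℝ) + 1) ^ 2 / ((q : ℝ) * (2 * (r : ℝ) + 2)) := by
  have hsdp : sdpVal (cwGraph p q r) (fun _ _ => (-1 : ℝ)) ≤
      (q : ℝ) * ((r : ℝ) + 1) + (2 * (r : ℝ) + 1) ^ 2 / 2 := by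
    refine (sdpVal_neg_one_le _).trans_eq ?_
    rw [Fintype.card_fin, cwGraph_compl_card_edgeFinset (by omega)]
    subst hp
    push_cast
    ring
  have hip : (q : ℝ) * (r + 1) ≤ ipVal (cwGraph p q r) (fun _ _ => (-1 : ℝ)) :=
    (cwGraph_edgeSum_cliqueCut hp).symm.le.trans
      (edgeSum_le_ipVal _ _ cliqueCut_eq_one_or_neg_one)
  have hpos : (0 : ℝ) < q * (r + 1) := by
    have : (2 : ℝ) ≤ q := by exact_mod_cast hq
    positivity
  refine ⟨hsdp, (div_le_div₀ (by positivity) hsdp hpos hip).trans_eq ?_⟩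
  field_simp
end

section
/- Let b in Z^n with sum_i b_i = 1 and let w in R^{E(K_n)} be defined by w_ij = -b_i b_j. Then sdp(K_n, w) <= (sum_i b_i^2)/2; combined with the hypermetric inequality ip(K_n, w) = (sum_i b_i^2 - 1)/2, this shows the integrality gap of any hypermetric inequality is at most (sum_i b_i^2)/(sum_i b_i^2 - 1) <= 3/2. -/
open Finset Real
open scoped Classical Pointwise

/- Since `∑ bᵢ uᵢ` has nonnegative squared norm, `∑_{i,j} bᵢ bⱼ ⟪uᵢ,uⱼ⟫ ≥ 0`; splitting off the
diagonal `∑ bᵢ²` (the `uᵢ` are unit vectors) gives `-∑_{i<j} bᵢ bⱼ ⟪uᵢ,uⱼ⟫ ≤ (∑ bᵢ²)/2` for every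
real `b`, so `sdp(Kₙ, w) ≤ (∑ bᵢ²)/2`. The gap bound is then arithmetic, since
`ip(Kₙ, w) = (∑ bᵢ² - 1)/2` and `∑ bᵢ² ≥ 3`. -/

theorem Finset.sum_sum_eq_two_nsmul_sum_lt_add_sum_diag {ι M : Type*} [Fintype ι] [LinearOrder ι]
    [AddCommMonoid M] (f : ι → ι → M) (hf : ∀ i j, f i j = f j i) :
    ∑ i, ∑ j, f i j = 2 • ∑ i, ∑ j, (if i < j then f i j else 0) + ∑ i, f i i := by
  have hsplit : ∀ i j, f i j = (if i < j then f i j else 0) + (if j < i then f j i else 0) +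
      (if i = j then f i j else 0) := by
    intro i j
    rcases lt_trichotomy i j with h | rfl | h
    · simp [h, h.not_gt, h.ne]
    · simp
    · simp [h, h.not_gt, h.ne', hf i j]
  simp_rw [sum_congr rfl fun i _ => sum_congr rfl fun j _ => hsplit i j, sum_add_distrib,
    sum_ite_eq, mem_univ, if_true]
  rw [sum_comm (f := fun i j => if j < i then f j i else 0), two_nsmul]

theorem real_inner_sum_smul_sum_smul_self {ι E : Type*} [Fintype ι] [NormedAddCommGroup E]
    [InnerProductSpace ℝ E] (b : ι → ℝ) (u : ι → E) :
    inner ℝ (∑ i, b i • u i) (∑ i, b i • u i) = ∑ i, ∑ j, b i * b j * inner ℝ (u i) (u j) := by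
  simp_rw [sum_inner, inner_sum, real_inner_smul_left, real_inner_smul_right, mul_assoc]

theorem neg_sum_lt_mul_inner_le_half_sum_sq {ι E : Type*} [Fintype ι] [LinearOrder ι]
    [NormedAddCommGroup E] [InnerProductSpace ℝ E] (b : ι → ℝ) (u : ι → E)
    (hu : ∀ i, ‖u i‖ = 1) :
    -∑ i, ∑ j, (if i < j then b i * b j * inner ℝ (u i) (u j) else 0) ≤ (∑ i, b i ^ 2) / 2 := by
  have hsymm : ∀ i j, b i * b j * inner ℝ (u i) (u j) = b j * b i * inner ℝ (u j) (u i) :=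
    fun i j => by rw [real_inner_comm, mul_comm (b i)]
  have hdiag : ∀ i, b i * b i * inner ℝ (u i) (u i) = b i ^ 2 := fun i => by
    rw [real_inner_self_eq_norm_sq, hu i]; ring
  have hgram := real_inner_sum_smul_sum_smul_self b u
  rw [sum_sum_eq_two_nsmul_sum_lt_add_sum_diag _ hsymm, two_nsmul] at hgram
  simp only [hdiag] at hgram
  linarith [real_inner_self_nonneg (x := ∑ i, b i • u i)]

theorem edgeSum_top {V : Type*} [Fintype V] [LinearOrder V] (w x : V → V → ℝ) :
    edgeSum ⊤ w x = ∑ i, ∑ j, if i < j then w i j * x i j else 0 := by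
  refine sum_congr rfl fun i _ => sum_congr rfl fun j _ => ?_
  by_cases h : i < j
  · simp [h, h.ne]
  · simp [h]

theorem sdpVal_top_neg_mul_le {V : Type*} [Fintype V] [LinearOrder V] (b : V → ℝ) :
    sdpVal ⊤ (fun i j => -(b i * b j)) ≤ (∑ i, b i ^ 2) / 2 := by
  refine Real.sSup_le ?_ (by positivity)
  rintro t ⟨u, hu, rfl⟩
  convert neg_sum_lt_mul_inner_le_half_sum_sq b u hu using 1
  rw [edgeSum_top, ← sum_neg_distrib]
  refine sum_congr rfl fun i _ => ?_
  rw [← sum_neg_distrib]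
  refine sum_congr rfl fun j _ => ?_
  split_ifs <;> ring

theorem hypermetric_gap_general (n : ℕ) (b : Fin n → ℤ) :
    sdpVal (⊤ : SimpleGraph (Fin n)) (fun i j => -((b i : ℝ) * (b j : ℝ))) ≤
      (∑ i, (b i : ℝ) ^ 2) / 2 ∧
    (ipVal (⊤ : SimpleGraph (Fin n)) (fun i j => -((b i : ℝ) * (b j : ℝ))) =
        ((∑ i, (b i : ℝ) ^ 2) - 1) / 2 →
      (3 : ℝ) ≤ ∑ i, (b i : ℝ) ^ 2 →
      sdpVal (⊤ : SimpleGraph (Fin n)) (fun i j => -((b i : ℝ) * (b j : ℝ))) /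
          ipVal (⊤ : SimpleGraph (Fin n)) (fun i j => -((b i : ℝ) * (b j : ℝ))) ≤
        3 / 2) := by
  have hsdp := sdpVal_top_neg_mul_le fun i => (b i : ℝ)
  refine ⟨hsdp, fun hip hS => ?_⟩
  rw [hip, div_le_iff₀ (by linarith)]
  linarith

/-- for `b ∈ ℤⁿ` with `∑ b_i = 1` and `w_ij = -b_i b_j`,
`sdp(K_n, w) ≤ (∑ b_i²)/2`; combined with `ip(K_n, w) = (∑ b_i² - 1)/2`
(the hypermetric inequality) and `∑ b_i² ≥ 3`, the integrality gap is
at most `3/2`. -/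
theorem hypermetric_gap (n : ℕ) (b : Fin n → ℤ) (hb : ∑ i, b i = 1) :
    sdpVal (⊤ : SimpleGraph (Fin n)) (fun i j => -((b i : ℝ) * (b j : ℝ))) ≤
      (∑ i, (b i : ℝ) ^ 2) / 2 ∧
    (ipVal (⊤ : SimpleGraph (Fin n)) (fun i j => -((b i : ℝ) * (b j : ℝ))) =
        ((∑ i, (b i : ℝ) ^ 2) - 1) / 2 →
      (3 : ℝ) ≤ ∑ i, (b i : ℝ) ^ 2 →
      sdpVal (⊤ : SimpleGraph (Fin n)) (fun i j => -((b i : ℝ) * (b j : ℝ))) /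
          ipVal (⊤ : SimpleGraph (Fin n)) (fun i j => -((b i : ℝ) * (b j : ℝ))) ≤
        3 / 2) :=
  hypermetric_gap_general n b
end
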